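/- arXiv:0812.1165 — 4 statements merged into one kernel-verified Lean document; each statement's English description precedes it below -/
import Mathlib

section
/- Let m ≥ 2 and let n ≥ 2 be even. Then the sum Σ_σ (−1)^{|σ|}, taken over all independent sets σ of C_{m,n} such that π(σ) ≠ ∅ and every cyclic gap between consecutive elements of π(σ) is even, equals −2·Z(C_{m−1,n}) + 2·(−1)^{mn/4} if m is even, and equals −2·Z(C_{m−1,n}) if m is odd. -/
/-!
When `n` is even, all cyclic gaps of `π(σ)` are even exactly when `π(σ)` lies in one of the two
parity classes of `ℤ/nℤ`. Writing `Z_C(k)` for the signed count of independent sets of the first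
`k` rows whose first row lies in `C`, the sum is therefore `Σ_C (Z_C(m) - Z(C_{m-1,n}))` over the
two classes. Summing out the first row by inclusion-exclusion forces the second row to contain
all of `C`; since membership in `C` alternates around the cycle, the second row is then exactly
`C` and the third row avoids `C`, so `Z_C(k + 2) = (-1)^(n/2) Z_{Cᶜ}(k)`. Together with
`Z_C(0) = 1` and `Z_C(1) = 0` this gives `Z_C(2j) = (-1)^(nj/2)` and `Z_C(2j + 1) = 0`.
-/

/-- Adjacency in the cylinder graph: vertices are pairs (row, column) with
rows in {1,…,m} (enforced separately) and columns in ℤ/nℤ.  Two distinct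
vertices are adjacent iff they are in the same row and their columns differ
by ±1 in ℤ/nℤ, or they are in the same column and their rows differ by 1. -/
def cylAdj (n : ℕ) (v w : ℕ × ZMod n) : Prop :=
  v ≠ w ∧ ((v.1 = w.1 ∧ (w.2 = v.2 + 1 ∨ v.2 = w.2 + 1)) ∨
    (v.2 = w.2 ∧ (v.1 + 1 = w.1 ∨ w.1 + 1 = v.1)))

/-- `σ` is an independent set of the cylinder graph `C_{m,n}`:
its vertices lie in {1,…,m} × ℤ/nℤ and no two of them are adjacent. -/
def cylIndep (m n : ℕ) (σ : Finset (ℕ × ZMod n)) : Prop :=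
  (∀ v ∈ σ, 1 ≤ v.1 ∧ v.1 ≤ m) ∧ ∀ v ∈ σ, ∀ w ∈ σ, ¬ cylAdj n v w

/-- Partition function of the hard square model at activity −1 on `C_{m,n}`:
`Z(C_{m,n}) = Σ_σ (−1)^{|σ|}` over all independent sets `σ`. -/
noncomputable def Zcyl (m n : ℕ) : ℤ :=
  ∑ᶠ σ ∈ {σ : Finset (ℕ × ZMod n) | cylIndep m n σ}, (-1 : ℤ) ^ σ.card

/-- `π(σ)`: the set of columns `j ∈ ℤ/nℤ` such that `(1,j) ∈ σ`. -/
def piRow (n : ℕ) (σ : Finset (ℕ × ZMod n)) : Finset (ZMod n) :=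
  (σ.filter fun v => v.1 = 1).image Prod.snd

/-- For a set `P ⊆ ℤ/nℤ` of columns, `cOffset n P j` is the least `r ≥ 1`
with `j − r ∈ P` (and `0` if no such `r` exists, i.e. if `P = ∅`).
For `j` a position of an interval of `P` this is the offset `r` of `j` in its
interval (so `j` is an even position iff `cOffset n P j` is positive and even);
for `x ∈ P` it is the length of the interval ending at `x`, i.e. the cyclic gap
from the previous element of `P` to `x`. -/
noncomputable def cOffset (n : ℕ) (P : Finset (ZMod n)) (j : ZMod n) : ℕ :=
  sInf {r : ℕ | 0 < r ∧ j - (r : ZMod n) ∈ P}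

/-- `π_e`: the elements of `P` sitting in even position of their interval. -/
noncomputable def piE (n : ℕ) (P : Finset (ZMod n)) : Finset (ZMod n) :=
  P.filter fun x => 0 < cOffset n P x ∧ Even (cOffset n P x)

/-- `π_o`: the elements of `P` sitting in odd position of their interval. -/
noncomputable def piO (n : ℕ) (P : Finset (ZMod n)) : Finset (ZMod n) :=
  P.filter fun x => Odd (cOffset n P x)

/-- The column `j` is free in `σ`: `(1,j) ∉ σ` and `σ ∪ {(1,j)}` is independent. -/
def freeCol (m n : ℕ) (σ : Finset (ℕ × ZMod n)) (j : ZMod n) : Prop :=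
  ((1 : ℕ), j) ∉ σ ∧ cylIndep m n (insert ((1 : ℕ), j) σ)

/-- The closure `σ̂` of `σ`: `σ` together with all `(1,j)` where `j` is a free
even position of one of the intervals of `σ` (if `π(σ) = ∅` nothing is added,
since then `cOffset` vanishes identically). -/
def clo (m n : ℕ) (σ : Finset (ℕ × ZMod n)) : Set (ℕ × ZMod n) :=
  ↑σ ∪ {v | v.1 = 1 ∧ 0 < cOffset n (piRow n σ) v.2 ∧
    Even (cOffset n (piRow n σ) v.2) ∧ freeCol m n σ v.2}

/-- The equivalence class `X_σ` of `σ`: all independent sets with the same closure. -/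
def Xclass (m n : ℕ) (σ : Finset (ℕ × ZMod n)) : Set (Finset (ℕ × ZMod n)) :=
  {τ | cylIndep m n τ ∧ clo m n τ = clo m n σ}

open Finset

theorem Finset.sum_powerset_union {α β : Type*} [DecidableEq α] [AddCommMonoid β]
    {s t : Finset α} (h : Disjoint s t) (f : Finset α → β) :
    ∑ u ∈ (s ∪ t).powerset, f u = ∑ a ∈ s.powerset, ∑ b ∈ t.powerset, f (a ∪ b) := by
  rw [← sum_product']
  refine sum_nbij' (fun u => (u ∩ s, u ∩ t)) (fun p => p.1 ∪ p.2) ?_ ?_ ?_ ?_ ?_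
  · simp
  · simp only [mem_product, mem_powerset, and_imp, Prod.forall]
    exact fun a b ha hb => union_subset_union ha hb
  · intro u hu
    rw [← inter_union_distrib_left, inter_eq_left.mpr (mem_powerset.mp hu)]
  · rintro ⟨a, b⟩ hab
    simp only [mem_product, mem_powerset] at hab
    have ha : a ∩ t = ∅ := disjoint_iff_inter_eq_empty.mp (h.mono_left hab.1)
    have hb : b ∩ s = ∅ := disjoint_iff_inter_eq_empty.mp (h.symm.mono_left hab.2)
    simp [union_inter_distrib_right, inter_eq_left.mpr hab.1, inter_eq_left.mpr hab.2, ha, hb]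
  · intro u hu
    rw [← inter_union_distrib_left, inter_eq_left.mpr (mem_powerset.mp hu)]

theorem Finset.filter_powerset_subset {α : Type*} [DecidableEq α] {s t : Finset α}
    (h : t ⊆ s) : {u ∈ s.powerset | u ⊆ t} = t.powerset := by
  ext u
  simp only [mem_filter, mem_powerset]
  exact ⟨And.right, fun ht => ⟨ht.trans h, ht⟩⟩

namespace SimpleGraph

variable {V W : Type*} (G : SimpleGraph V)

theorem isIndepSet_union_iff {s t : Set V} :
    G.IsIndepSet (s ∪ t) ↔
      G.IsIndepSet s ∧ G.IsIndepSet t ∧ ∀ a ∈ s, ∀ b ∈ t, ¬ G.Adj a b := by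
  rw [isIndepSet_iff, Set.pairwise_union]
  refine and_congr_right' <| and_congr_right' <|
    forall₂_congr fun a _ => forall₂_congr fun b _ => ?_
  exact ⟨fun h hab => (h (G.ne_of_adj hab)).1 hab, fun h _ => ⟨h, fun hba => h hba.symm⟩⟩

variable [DecidableEq V]

open scoped Classical in
noncomputable def signedIndepCount (U : Finset V) : ℤ :=
  ∑ σ ∈ U.powerset with G.IsIndepSet ((σ : Finset V) : Set V), (-1) ^ #σ

open scoped Classical

theorem signedIndepCount_of_isIndepSet {U : Finset V} (hU : G.IsIndepSet (U : Set V)) :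
    G.signedIndepCount U = if U = ∅ then 1 else 0 := by
  rw [signedIndepCount, filter_true_of_mem fun σ hσ => hU.mono (by simpa using hσ),
    sum_powerset_neg_one_pow_card]

@[simp]
theorem signedIndepCount_empty : G.signedIndepCount ∅ = 1 := by
  rw [signedIndepCount_of_isIndepSet _ (by simp), if_pos rfl]

theorem signedIndepCount_map [DecidableEq W] {H : SimpleGraph W} (f : G ↪g H) (U : Finset V) :
    H.signedIndepCount (U.map f.toEmbedding) = G.signedIndepCount U := by
  have hf := f.toEmbedding.injective
  rw [signedIndepCount, signedIndepCount, map_eq_image, powerset_image, filter_image, sum_image]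
  · refine sum_congr (filter_congr fun σ _ => ?_) fun σ _ => by
      rw [card_image_of_injective _ hf]
    rw [coe_image, isIndepSet_iff, isIndepSet_iff, hf.injOn.pairwise_image]
    exact forall₅_congr fun a _ b _ _ => not_congr f.map_adj_iff
  · exact fun a _ b _ hab => image_injective hf hab

theorem signedIndepCount_sub_of_subset {U₀ U₁ : Finset V} (h : U₀ ⊆ U₁) :
    G.signedIndepCount U₁ - G.signedIndepCount U₀ =
      ∑ σ ∈ U₁.powerset with G.IsIndepSet ((σ : Finset V) : Set V) ∧ ¬ σ ⊆ U₀, (-1) ^ #σ := by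
  have h₀ : {σ ∈ U₁.powerset | G.IsIndepSet ((σ : Finset V) : Set V) ∧ σ ⊆ U₀} =
      {σ ∈ U₀.powerset | G.IsIndepSet ((σ : Finset V) : Set V)} := by
    ext σ
    simp only [mem_filter, mem_powerset]
    exact ⟨fun ⟨_, hσ, h₀⟩ => ⟨h₀, hσ⟩, fun ⟨h₀, hσ⟩ => ⟨h₀.trans h, hσ, h₀⟩⟩
  rw [signedIndepCount, signedIndepCount, ← sum_filter_add_sum_filter_not _ (· ⊆ U₀),
    filter_filter, filter_filter, h₀, add_sub_cancel_left]

/-- For fixed `τ`, the sum over the part `S ⊆ C` runs over all subsets of the vertices of `C`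
without a neighbour in `τ`, so it vanishes unless there is no such vertex. -/
theorem signedIndepCount_union {C R : Finset V} (hCR : Disjoint C R)
    (hC : G.IsIndepSet (C : Set V)) :
    G.signedIndepCount (C ∪ R) =
      ∑ τ ∈ R.powerset with
        G.IsIndepSet ((τ : Finset V) : Set V) ∧ ∀ c ∈ C, ∃ t ∈ τ, G.Adj c t, (-1) ^ #τ := by
  set F : Finset V → Finset V := fun τ => {c ∈ C | ∀ t ∈ τ, ¬ G.Adj c t}
  have key : ∀ S ⊆ C, ∀ τ : Finset V, G.IsIndepSet ((S ∪ τ : Finset V) : Set V) ↔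
      G.IsIndepSet (τ : Set V) ∧ S ⊆ F τ := by
    intro S hS τ
    rw [coe_union, isIndepSet_union_iff, subset_iff]
    simp only [F, mem_filter]
    exact ⟨fun ⟨_, hτ, h⟩ => ⟨hτ, fun c hc => ⟨hS hc, h c hc⟩⟩,
      fun ⟨hτ, h⟩ => ⟨hC.mono (by simpa using hS), hτ, fun c hc => (h hc).2⟩⟩
  rw [signedIndepCount, sum_filter, sum_powerset_union hCR, sum_comm, sum_filter]
  refine sum_congr rfl fun τ hτ => ?_
  rw [mem_powerset] at hτ
  calc ∑ S ∈ C.powerset,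
        (if G.IsIndepSet ((S ∪ τ : Finset V) : Set V) then (-1 : ℤ) ^ #(S ∪ τ) else 0)
      = ∑ S ∈ C.powerset,
          if G.IsIndepSet (τ : Set V) ∧ S ⊆ F τ then (-1) ^ #τ * (-1) ^ #S else 0 := by
        refine sum_congr rfl fun S hS => ?_
        simp only [key S (mem_powerset.mp hS) τ,
          card_union_of_disjoint (hCR.mono (mem_powerset.mp hS) hτ), pow_add, mul_comm]
    _ = if G.IsIndepSet (τ : Set V) then (-1) ^ #τ * ∑ S ∈ (F τ).powerset, (-1) ^ #S
          else 0 := by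
        by_cases hτi : G.IsIndepSet (τ : Set V)
        · simp only [hτi, true_and, if_true]
          rw [← sum_filter, filter_powerset_subset (filter_subset _ C), mul_sum]
        · simp [hτi]
    _ = _ := by
        by_cases hτi : G.IsIndepSet (τ : Set V)
        · simp only [hτi, true_and, if_true, sum_powerset_neg_one_pow_card, F,
            filter_eq_empty_iff, not_forall, not_not, exists_prop]
          split_ifs <;> simp
        · simp [hτi]

theorem sum_isIndepSet_superset {D R : Finset V} (hDR : Disjoint D R)
    (hD : G.IsIndepSet (D : Set V)) :
    ∑ τ ∈ (D ∪ R).powerset with G.IsIndepSet ((τ : Finset V) : Set V) ∧ D ⊆ τ, (-1) ^ #τ =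
      (-1) ^ #D * G.signedIndepCount {v ∈ R | ∀ d ∈ D, ¬ G.Adj d v} := by
  set F := {v ∈ R | ∀ d ∈ D, ¬ G.Adj d v}
  have key : ∀ τ ⊆ R, G.IsIndepSet ((D ∪ τ : Finset V) : Set V) ↔
      τ ⊆ F ∧ G.IsIndepSet (τ : Set V) := by
    intro τ hτ
    rw [coe_union, isIndepSet_union_iff, and_comm (a := τ ⊆ F)]
    simp only [hD, true_and, mem_coe, F, subset_iff, mem_filter]
    exact and_congr_right' ⟨fun h v hv => ⟨hτ hv, fun d hd => h d hd v hv⟩,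
      fun h d hd v hv => (h hv).2 d hd⟩
  have hcover : ∀ S ⊆ D, ∀ τ ⊆ R, D ⊆ S ∪ τ ↔ S = D := by
    intro S hS τ hτ
    refine ⟨fun h => hS.antisymm fun d hd => ?_, fun h => h ▸ subset_union_left⟩
    exact (mem_union.mp (h hd)).resolve_right fun hτd =>
      Finset.disjoint_left.mp hDR hd (hτ hτd)
  rw [sum_filter, sum_powerset_union hDR]
  calc ∑ S ∈ D.powerset, ∑ τ ∈ R.powerset,
        (if G.IsIndepSet ((S ∪ τ : Finset V) : Set V) ∧ D ⊆ S ∪ τ then (-1 : ℤ) ^ #(S ∪ τ)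
          else 0)
      = ∑ S ∈ D.powerset, if S = D then ∑ τ ∈ R.powerset,
          (if G.IsIndepSet ((D ∪ τ : Finset V) : Set V) then (-1 : ℤ) ^ #(D ∪ τ) else 0)
          else 0 := by
        refine sum_congr rfl fun S hS => ?_
        rw [mem_powerset] at hS
        split_ifs with hSD
        · subst hSD
          exact sum_congr rfl fun τ hτ => by simp [hcover S subset_rfl τ (mem_powerset.mp hτ)]
        · exact sum_eq_zero fun τ hτ => by simp [hcover S hS τ (mem_powerset.mp hτ), hSD]
    _ = ∑ τ ∈ R.powerset,
          if τ ⊆ F ∧ G.IsIndepSet (τ : Set V) then (-1) ^ #D * (-1) ^ #τ else 0 := by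
        rw [sum_ite_eq' _ _ _, if_pos (mem_powerset_self D)]
        refine sum_congr rfl fun τ hτ => ?_
        rw [mem_powerset] at hτ
        simp only [key τ hτ, card_union_of_disjoint (hDR.mono_right hτ), pow_add]
    _ = _ := by
        rw [← sum_filter, ← filter_filter, filter_powerset_subset (filter_subset _ R),
          signedIndepCount, mul_sum]

end SimpleGraph

section Cylinder

variable {n : ℕ}

def cylGraph (n : ℕ) : SimpleGraph (ℕ × ZMod n) where
  Adj := cylAdj n
  symm := ⟨fun _ _ h => ⟨h.1.symm, h.2.imp (fun h' => ⟨h'.1.symm, h'.2.symm⟩)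
    fun h' => ⟨h'.1.symm, h'.2.symm⟩⟩⟩
  loopless := ⟨fun _ h => h.1 rfl⟩

@[simp]
theorem cylGraph_adj {v w : ℕ × ZMod n} : (cylGraph n).Adj v w ↔ cylAdj n v w := Iff.rfl

def rowShift (n d : ℕ) : cylGraph n ↪g cylGraph n where
  toFun v := (v.1 + d, v.2)
  inj' v w h := by simpa [Prod.ext_iff] using h
  map_rel_iff' {v w} := by
    show cylAdj n (v.1 + d, v.2) (w.1 + d, w.2) ↔ cylAdj n v w
    simp only [cylAdj, ne_eq, Prod.ext_iff, add_left_inj, add_right_comm _ d 1]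

@[simp]
theorem rowShift_apply {d : ℕ} (v : ℕ × ZMod n) : rowShift n d v = (v.1 + d, v.2) := rfl

theorem cylAdj_row_iff {a : ℕ} {c : ZMod n} {t : ℕ × ZMod n} (ht : a + 1 ≤ t.1) :
    cylAdj n (a, c) t ↔ t = (a + 1, c) := by
  obtain ⟨i, j⟩ := t
  simp only [cylAdj, ne_eq, Prod.mk.injEq] at ht ⊢
  constructor
  · rintro ⟨-, ⟨rfl, -⟩ | ⟨rfl, h | h⟩⟩ <;> first | omega | exact ⟨h.symm, rfl⟩
  · rintro ⟨rfl, rfl⟩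
    exact ⟨by omega, Or.inr ⟨rfl, Or.inl rfl⟩⟩

/-- The signed count `Z_C(k)` of independent sets of the first `k` rows whose first row lies
in `C` is `(cylGraph n).signedIndepCount (cylBlock n 1 k C)`. -/
def cylBlock (n a b : ℕ) [NeZero n] (C : Finset (ZMod n)) : Finset (ℕ × ZMod n) :=
  {v ∈ Icc a b ×ˢ univ | v.1 = a → v.2 ∈ C}

variable [NeZero n]

@[simp]
theorem mem_cylBlock {a b : ℕ} {C : Finset (ZMod n)} {v : ℕ × ZMod n} :
    v ∈ cylBlock n a b C ↔ a ≤ v.1 ∧ v.1 ≤ b ∧ (v.1 = a → v.2 ∈ C) := by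
  simp [cylBlock, and_assoc]

theorem cylBlock_eq_empty {a b : ℕ} (h : b < a) (C : Finset (ZMod n)) :
    cylBlock n a b C = ∅ := by
  ext v
  simp only [mem_cylBlock, notMem_empty, iff_false]
  omega

theorem cylBlock_empty (a b : ℕ) : cylBlock n a b ∅ = cylBlock n (a + 1) b univ := by
  ext v
  simp only [mem_cylBlock, notMem_empty, imp_false, mem_univ, imp_true_iff, and_true]
  omega

theorem cylBlock_union {a b : ℕ} (h : a ≤ b) (C C' : Finset (ZMod n)) :
    cylBlock n a b (C ∪ C') = {a} ×ˢ C ∪ cylBlock n a b C' := by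
  ext ⟨i, j⟩
  simp only [mem_cylBlock, mem_union, mem_product, mem_singleton]
  by_cases hi : i = a <;> simp [hi, h]

theorem cylBlock_eq_row_union {a b : ℕ} (h : a ≤ b) (C : Finset (ZMod n)) :
    cylBlock n a b C = {a} ×ˢ C ∪ cylBlock n (a + 1) b univ := by
  simpa [cylBlock_empty] using cylBlock_union h C ∅

theorem disjoint_row_cylBlock {a b : ℕ} {C C' : Finset (ZMod n)} (h : Disjoint C C') :
    Disjoint ({a} ×ˢ C) (cylBlock n a b C') := by
  rw [Finset.disjoint_left]
  rintro ⟨i, j⟩ hv hv'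
  simp only [mem_product, mem_singleton] at hv
  exact Finset.disjoint_left.mp h hv.2 ((mem_cylBlock.mp hv').2.2 hv.1)

theorem cylBlock_map_rowShift (a b d : ℕ) (C : Finset (ZMod n)) :
    (cylBlock n a b C).map (rowShift n d).toEmbedding = cylBlock n (a + d) (b + d) C := by
  ext ⟨i, j⟩
  simp only [mem_map, mem_cylBlock, RelEmbedding.coe_toEmbedding, rowShift_apply, Prod.exists,
    Prod.mk.injEq]
  constructor
  · rintro ⟨i', j', ⟨h1, h2, h3⟩, rfl, rfl⟩
    exact ⟨by omega, by omega, fun h => h3 (by omega)⟩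
  · rintro ⟨h1, h2, h3⟩
    exact ⟨i - d, j, ⟨by omega, by omega, fun h => h3 (by omega)⟩, by omega, rfl⟩

theorem signedIndepCount_cylBlock_add (a b d : ℕ) (C : Finset (ZMod n)) :
    (cylGraph n).signedIndepCount (cylBlock n (a + d) (b + d) C) =
      (cylGraph n).signedIndepCount (cylBlock n a b C) := by
  rw [← cylBlock_map_rowShift, SimpleGraph.signedIndepCount_map]

theorem cylIndep_iff {m : ℕ} {σ : Finset (ℕ × ZMod n)} :
    cylIndep m n σ ↔
      σ ⊆ cylBlock n 1 m univ ∧ (cylGraph n).IsIndepSet (σ : Set (ℕ × ZMod n)) := by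
  refine and_congr (by simp [subset_iff]) ⟨fun h v hv w hw _ => h v hv w hw,
    fun h v hv w hw (hvw : cylAdj n v w) => h hv hw hvw.1 hvw⟩

end Cylinder

section Alternating

variable {n : ℕ} {C : Finset (ZMod n)}

def IsAlternating (C : Finset (ZMod n)) : Prop := ∀ j, j + 1 ∈ C ↔ j ∉ C

theorem IsAlternating.add_one_notMem (hC : IsAlternating C) {j : ZMod n} (hj : j ∈ C) :
    j + 1 ∉ C :=
  fun h => (hC j).mp h hj

theorem IsAlternating.nonempty (hC : IsAlternating C) : C.Nonempty := by
  by_contra h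
  simpa [not_nonempty_iff_eq_empty.mp h] using hC 0

theorem isIndepSet_row (hC : IsAlternating C) (a : ℕ) :
    (cylGraph n).IsIndepSet (({a} ×ˢ C : Finset (ℕ × ZMod n)) : Set (ℕ × ZMod n)) := by
  rintro ⟨i, j⟩ hv ⟨i', j'⟩ hw - ⟨-, h⟩
  simp only [coe_product, coe_singleton, Set.mem_prod, Set.mem_singleton_iff, mem_coe] at hv hw
  obtain ⟨rfl, hj⟩ := hv
  obtain ⟨rfl, hj'⟩ := hw
  rcases h with ⟨-, rfl | rfl⟩ | ⟨-, h | h⟩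
  · exact hC.add_one_notMem hj hj'
  · exact hC.add_one_notMem hj' hj
  all_goals omega

variable [NeZero n]

theorem IsAlternating.compl (hC : IsAlternating C) : IsAlternating Cᶜ := fun j => by
  rw [mem_compl, mem_compl, hC j, not_not]

theorem IsAlternating.two_mul_card (hC : IsAlternating C) : 2 * #C = n := by
  have hshift : Cᶜ = C.map (addRightEmbedding 1) := by
    ext x
    simp only [mem_compl, mem_map, addRightEmbedding_apply]
    refine ⟨fun hx => ⟨x - 1, ?_, sub_add_cancel x 1⟩, ?_⟩
    · by_contra h
      exact hx (by simpa using (hC (x - 1)).mpr h)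
    · rintro ⟨c, hc, rfl⟩
      exact hC.add_one_notMem hc
  have h := card_add_card_compl C
  rw [hshift, card_map, ZMod.card] at h
  omega

end Alternating

section Recursion

open scoped Classical

variable {n : ℕ} [NeZero n] {C : Finset (ZMod n)}

theorem signedIndepCount_cylBlock_eq_sum_superset (hC : IsAlternating C) {a b : ℕ}
    (h : a ≤ b) :
    (cylGraph n).signedIndepCount (cylBlock n a b C) =
      ∑ τ ∈ (cylBlock n (a + 1) b univ).powerset with
        (cylGraph n).IsIndepSet ((τ : Finset (ℕ × ZMod n)) : Set (ℕ × ZMod n)) ∧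
          {a + 1} ×ˢ C ⊆ τ, (-1) ^ #τ := by
  have hdisj := cylBlock_empty (n := n) a b ▸ disjoint_row_cylBlock (disjoint_empty_right C)
  rw [cylBlock_eq_row_union h, (cylGraph n).signedIndepCount_union hdisj (isIndepSet_row hC a)]
  refine sum_congr (filter_congr fun τ hτ => and_congr_right' ?_) fun _ _ => rfl
  have hrows : ∀ t ∈ τ, a + 1 ≤ t.1 := fun t ht => (mem_cylBlock.mp (mem_powerset.mp hτ ht)).1
  constructor
  · rintro h ⟨i, c⟩ hv
    simp only [mem_product, mem_singleton] at hv
    obtain ⟨rfl, hc⟩ := hv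
    obtain ⟨t, ht, hadj⟩ := h (a, c) (mem_product.mpr ⟨mem_singleton_self a, hc⟩)
    rwa [← (cylAdj_row_iff (hrows t ht)).mp hadj]
  · rintro h ⟨i, c⟩ hv
    simp only [mem_product, mem_singleton] at hv
    obtain ⟨rfl, hc⟩ := hv
    exact ⟨(i + 1, c), h (mem_product.mpr ⟨mem_singleton_self _, hc⟩),
      (cylAdj_row_iff le_rfl).mpr rfl⟩

theorem filter_cylBlock_not_adj_row (hC : IsAlternating C) (a b : ℕ) :
    {v ∈ cylBlock n a b Cᶜ | ∀ d ∈ {a} ×ˢ C, ¬ (cylGraph n).Adj d v} =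
      cylBlock n (a + 1) b Cᶜ := by
  ext ⟨i, j⟩
  simp only [mem_filter, mem_cylBlock, mem_compl, mem_product, mem_singleton, and_imp,
    Prod.forall, cylGraph_adj]
  constructor
  · rintro ⟨⟨h1, h2, h3⟩, hna⟩
    -- a free column of row `a` would be adjacent to its successor, which lies in `C`
    have hi : i ≠ a := fun hi => by
      have hj : j + 1 ∈ C := (hC j).mpr (h3 hi)
      exact hna a (j + 1) rfl hj
        ⟨fun h => h3 hi ((Prod.mk.inj h).2 ▸ hj), Or.inl ⟨hi.symm, Or.inr rfl⟩⟩
    refine ⟨by omega, h2, fun hi' hj => hna a j rfl hj ?_⟩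
    exact (cylAdj_row_iff (by omega)).mpr (by rw [hi'])
  · rintro ⟨h1, h2, h3⟩
    refine ⟨⟨by omega, h2, by omega⟩, fun a' c ha' hc hadj => ?_⟩
    subst ha'
    obtain ⟨hi, rfl⟩ := Prod.ext_iff.mp ((cylAdj_row_iff (by simpa using h1)).mp hadj)
    exact h3 hi hc

theorem sum_superset_row_eq (hC : IsAlternating C) {a b : ℕ} (h : a ≤ b) :
    ∑ τ ∈ (cylBlock n a b univ).powerset with
        (cylGraph n).IsIndepSet ((τ : Finset (ℕ × ZMod n)) : Set (ℕ × ZMod n)) ∧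
          {a} ×ˢ C ⊆ τ, (-1) ^ #τ =
      (-1) ^ #C * (cylGraph n).signedIndepCount (cylBlock n (a + 1) b Cᶜ) := by
  rw [← union_compl C, cylBlock_union h, (cylGraph n).sum_isIndepSet_superset
    (disjoint_row_cylBlock disjoint_compl_right) (isIndepSet_row hC a),
    filter_cylBlock_not_adj_row hC, card_product, card_singleton, one_mul]

theorem signedIndepCount_cylBlock_add_two (hC : IsAlternating C) (k : ℕ) :
    (cylGraph n).signedIndepCount (cylBlock n 1 (k + 2) C) =
      (-1) ^ #C * (cylGraph n).signedIndepCount (cylBlock n 1 k Cᶜ) := by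
  rw [signedIndepCount_cylBlock_eq_sum_superset hC (by omega),
    sum_superset_row_eq hC (a := 1 + 1) (b := k + 2) (by omega),
    ← signedIndepCount_cylBlock_add 1 k 2]

theorem signedIndepCount_cylBlock_two_mul (hC : IsAlternating C) (k : ℕ) :
    (cylGraph n).signedIndepCount (cylBlock n 1 (2 * k) C) = (-1) ^ (n / 2 * k) := by
  induction k generalizing C with
  | zero =>
    rw [mul_zero, cylBlock_eq_empty zero_lt_one, SimpleGraph.signedIndepCount_empty, mul_zero,
      pow_zero]
  | succ k ih =>
    rw [mul_add_one, signedIndepCount_cylBlock_add_two hC, ih hC.compl, ← pow_add,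
      show #C = n / 2 by have := hC.two_mul_card; omega]
    ring

theorem signedIndepCount_cylBlock_two_mul_add_one (hC : IsAlternating C) (k : ℕ) :
    (cylGraph n).signedIndepCount (cylBlock n 1 (2 * k + 1) C) = 0 := by
  induction k generalizing C with
  | zero =>
    rw [cylBlock_eq_row_union le_rfl, cylBlock_eq_empty (by omega), union_empty,
      (cylGraph n).signedIndepCount_of_isIndepSet (isIndepSet_row hC 1),
      if_neg ((singleton_nonempty 1).product hC.nonempty).ne_empty]
  | succ k ih =>
    rw [show 2 * (k + 1) + 1 = 2 * k + 1 + 2 by ring, signedIndepCount_cylBlock_add_two hC,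
      ih hC.compl, mul_zero]

end Recursion

section Gaps

variable {n : ℕ} [NeZero n] {P : Finset (ZMod n)}

theorem cOffset_pos_and_sub_mem (hP : P.Nonempty) (x : ZMod n) :
    0 < cOffset n P x ∧ x - (cOffset n P x : ZMod n) ∈ P := by
  obtain ⟨y, hy⟩ := hP
  have hne : {r : ℕ | 0 < r ∧ x - (r : ZMod n) ∈ P}.Nonempty :=
    ⟨n + (x - y).val, by have := NeZero.pos n; omega, by simpa [ZMod.natCast_self] using hy⟩
  exact Nat.sInf_mem hne

omit [NeZero n] in
theorem cOffset_le {x : ZMod n} {r : ℕ} (hr : 0 < r) (h : x - (r : ZMod n) ∈ P) :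
    cOffset n P x ≤ r :=
  Nat.sInf_le ⟨hr, h⟩

variable (hd : 2 ∣ n)

def parityClass (c : ZMod 2) : Finset (ZMod n) := {x ∈ univ | ZMod.castHom hd (ZMod 2) x = c}

variable {hd}

@[simp]
theorem mem_parityClass {c : ZMod 2} {x : ZMod n} :
    x ∈ parityClass hd c ↔ ZMod.castHom hd (ZMod 2) x = c := by
  simp only [parityClass, mem_filter, mem_univ, true_and]

theorem isAlternating_parityClass (c : ZMod 2) : IsAlternating (parityClass hd c) := fun j => by
  simp only [mem_parityClass, map_add, map_one]
  generalize ZMod.castHom hd (ZMod 2) j = a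
  revert a c; decide

theorem castHom_eq_of_even_cOffset (heven : ∀ x ∈ P, Even (cOffset n P x)) {x y : ZMod n}
    (hx : x ∈ P) (hy : y ∈ P) : ZMod.castHom hd (ZMod 2) x = ZMod.castHom hd (ZMod 2) y := by
  induction h : (x - y).val using Nat.strong_induction_on generalizing x with
  | _ d ih =>
    obtain rfl | hd0 := eq_or_ne d 0
    · rw [sub_eq_zero.mp ((ZMod.val_eq_zero _).mp h)]
    -- step back from `x` to the previous element `x - g` of `P`: same parity, closer to `y`
    set g := cOffset n P x
    obtain ⟨hg, hgP⟩ := cOffset_pos_and_sub_mem ⟨x, hx⟩ x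
    have hgd : g ≤ d := cOffset_le (by omega) (by rw [← h, ZMod.natCast_zmod_val]; simpa)
    have hval : (x - g - y).val = d - g := by
      have hgn : g < n := hgd.trans_lt (h ▸ ZMod.val_lt _)
      rw [sub_right_comm, ZMod.val_sub (by rwa [ZMod.val_natCast_of_lt hgn, h]), h,
        ZMod.val_natCast_of_lt hgn]
    rw [← ih (d - g) (by omega) hgP hval, map_sub, map_natCast,
      (ZMod.natCast_eq_zero_iff_even).mpr (heven x hx), sub_zero]

theorem even_cOffset_iff :
    (∀ x ∈ P, Even (cOffset n P x)) ↔ ∃ c, P ⊆ parityClass hd c := by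
  constructor
  · intro heven
    obtain rfl | ⟨y, hy⟩ := P.eq_empty_or_nonempty
    · exact ⟨0, empty_subset _⟩
    exact ⟨_, fun x hx => mem_parityClass.mpr (castHom_eq_of_even_cOffset heven hx hy)⟩
  · rintro ⟨c, hc⟩ x hx
    obtain ⟨-, hgP⟩ := cOffset_pos_and_sub_mem ⟨x, hx⟩ x
    have h := mem_parityClass.mp (hc hgP)
    rw [map_sub, map_natCast, mem_parityClass.mp (hc hx), sub_eq_self] at h
    exact ZMod.natCast_eq_zero_iff_even.mp h

end Gaps

section Assembly

open scoped Classical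

variable {n : ℕ}

theorem mem_piRow {σ : Finset (ℕ × ZMod n)} {j : ZMod n} : j ∈ piRow n σ ↔ (1, j) ∈ σ := by
  simp only [piRow, mem_image, mem_filter]
  exact ⟨fun ⟨v, ⟨hv, h1⟩, h2⟩ => by rwa [← h2, ← h1], fun h => ⟨_, ⟨h, rfl⟩, rfl⟩⟩

variable [NeZero n]

theorem piRow_subset_iff {m : ℕ} {σ : Finset (ℕ × ZMod n)} (hσ : σ ⊆ cylBlock n 1 m univ)
    (C : Finset (ZMod n)) : piRow n σ ⊆ C ↔ σ ⊆ cylBlock n 1 m C := by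
  constructor
  · intro h ⟨i, j⟩ hv
    obtain ⟨h1, h2, -⟩ := mem_cylBlock.mp (hσ hv)
    exact mem_cylBlock.mpr ⟨h1, h2, fun hi => h (mem_piRow.mpr (hi ▸ hv))⟩
  · intro h j hj
    exact (mem_cylBlock.mp (h (mem_piRow.mp hj))).2.2 rfl

theorem setOf_cylIndep_and (m : ℕ) (p : Finset (ℕ × ZMod n) → Prop) :
    {σ | cylIndep m n σ ∧ p σ} =
      ↑{σ ∈ (cylBlock n 1 m univ).powerset |
        (cylGraph n).IsIndepSet ((σ : Finset (ℕ × ZMod n)) : Set (ℕ × ZMod n)) ∧ p σ} := by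
  ext σ
  simp [cylIndep_iff, and_assoc]

theorem Zcyl_eq_signedIndepCount (m : ℕ) :
    Zcyl m n = (cylGraph n).signedIndepCount (cylBlock n 1 m univ) := by
  rw [Zcyl, SimpleGraph.signedIndepCount, ← finsum_mem_coe_finset]
  congr 1
  ext σ
  simp [cylIndep_iff]

theorem signedIndepCount_cylBlock_empty {m : ℕ} (hm : 1 ≤ m) :
    (cylGraph n).signedIndepCount (cylBlock n 1 m ∅) = Zcyl (m - 1) n := by
  obtain ⟨m, rfl⟩ := Nat.exists_eq_add_of_le' hm
  rw [cylBlock_empty, signedIndepCount_cylBlock_add 1 m 1, Zcyl_eq_signedIndepCount,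
    Nat.add_sub_cancel]

theorem sum_piRow_nonempty_subset (m : ℕ) (C : Finset (ZMod n)) :
    ∑ σ ∈ (cylBlock n 1 m univ).powerset with
        (cylGraph n).IsIndepSet ((σ : Finset (ℕ × ZMod n)) : Set (ℕ × ZMod n)) ∧
          (piRow n σ).Nonempty ∧ piRow n σ ⊆ C, (-1) ^ #σ =
      (cylGraph n).signedIndepCount (cylBlock n 1 m C) -
        (cylGraph n).signedIndepCount (cylBlock n 1 m ∅) := by
  have hmono : cylBlock n 1 m ∅ ⊆ cylBlock n 1 m C := fun v hv => by simp_all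
  rw [(cylGraph n).signedIndepCount_sub_of_subset hmono]
  refine sum_congr (ext fun σ => ?_) fun _ _ => rfl
  simp only [mem_filter, mem_powerset]
  constructor
  · rintro ⟨hσ, hind, hne, hC⟩
    rw [← piRow_subset_iff hσ, ← piRow_subset_iff hσ, subset_empty, ← not_nonempty_iff_eq_empty]
    exact ⟨hC, hind, not_not.mpr hne⟩
  · rintro ⟨hσ, hind, hne⟩
    have hσ' : σ ⊆ cylBlock n 1 m univ := hσ.trans fun v hv => by simp_all
    rw [← piRow_subset_iff hσ', subset_empty, ← not_nonempty_iff_eq_empty, not_not] at hne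
    exact ⟨hσ', hind, hne, (piRow_subset_iff hσ' C).mpr hσ⟩

theorem sum_even_gaps_eq (hd : 2 ∣ n) {m : ℕ} (hm : 1 ≤ m) :
    ∑ᶠ σ ∈ {σ : Finset (ℕ × ZMod n) | cylIndep m n σ ∧ (piRow n σ).Nonempty ∧
        ∀ x ∈ piRow n σ, Even (cOffset n (piRow n σ) x)}, (-1 : ℤ) ^ #σ =
      (cylGraph n).signedIndepCount (cylBlock n 1 m (parityClass hd 0)) +
        (cylGraph n).signedIndepCount (cylBlock n 1 m (parityClass hd 1)) - 2 * Zcyl (m - 1) n := by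
  have hsplit : ∀ P : Finset (ZMod n), (P.Nonempty ∧ ∀ x ∈ P, Even (cOffset n P x)) ↔
      (P.Nonempty ∧ P ⊆ parityClass hd 0) ∨ (P.Nonempty ∧ P ⊆ parityClass hd 1) := fun P => by
    rw [even_cOffset_iff (hd := hd), ← and_or_left]
    exact and_congr_right' Fin.exists_fin_two
  have hdisj : Disjoint (parityClass hd 0) (parityClass hd 1) :=
    disjoint_left.mpr fun x h0 h1 => zero_ne_one ((mem_parityClass.mp h0).symm.trans
      (mem_parityClass.mp h1))
  simp_rw [setOf_cylIndep_and m, hsplit, and_or_left, filter_or]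
  rw [finsum_mem_coe_finset, sum_union, sum_piRow_nonempty_subset, sum_piRow_nonempty_subset,
    signedIndepCount_cylBlock_empty hm]
  · ring
  · refine disjoint_filter.mpr fun σ _ h0 h1 => ?_
    obtain ⟨x, hx⟩ := h0.2.1
    exact disjoint_left.mp hdisj (h0.2.2 hx) (h1.2.2 hx)

end Assembly

/-- For `m ≥ 2` and even `n ≥ 2`, the sum of `(−1)^{|σ|}` over all
independent sets `σ` of `C_{m,n}` with `π(σ) ≠ ∅` and all cyclic gaps of `π(σ)`
even equals `−2·Z(C_{m−1,n}) + 2·(−1)^{mn/4}` if `m` is even, and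
`−2·Z(C_{m−1,n})` if `m` is odd. -/
theorem P2_sum (m n : ℕ) (hm : 2 ≤ m) (hn : 2 ≤ n) (hne : Even n) :
    (∑ᶠ σ ∈ {σ : Finset (ℕ × ZMod n) | cylIndep m n σ ∧ (piRow n σ).Nonempty ∧
        ∀ x ∈ piRow n σ, Even (cOffset n (piRow n σ) x)}, (-1 : ℤ) ^ σ.card) =
      -2 * Zcyl (m - 1) n +
        (if Even m then 2 * (-1 : ℤ) ^ (m * n / 4) else 0) := by
  have : NeZero n := ⟨by omega⟩
  obtain ⟨b, rfl⟩ : 2 ∣ n := hne.two_dvd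
  rw [sum_even_gaps_eq ⟨b, rfl⟩ (by omega)]
  obtain ⟨k, rfl | rfl⟩ := Nat.even_or_odd' m
  · rw [signedIndepCount_cylBlock_two_mul (isAlternating_parityClass 0),
      signedIndepCount_cylBlock_two_mul (isAlternating_parityClass 1), if_pos (even_two_mul k),
      show 2 * k * (2 * b) = 4 * (b * k) by ring, Nat.mul_div_cancel_left _ four_pos,
      Nat.mul_div_cancel_left _ two_pos]
    ring
  · rw [signedIndepCount_cylBlock_two_mul_add_one (isAlternating_parityClass 0),
      signedIndepCount_cylBlock_two_mul_add_one (isAlternating_parityClass 1),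
      if_neg (Nat.not_even_two_mul_add_one k)]
    ring
end

section
/- Let m ≥ 1 and let n ≥ 3 be divisible by 3. Then the sum Σ_σ (−1)^{|σ|}, taken over all independent sets σ of C_{m,n} such that π(σ) ≠ ∅ and every cyclic gap between consecutive elements of π(σ) equals 3 (equivalently, π(σ) consists of all positions in a fixed residue class modulo 3), equals: 0 if m ≡ 0 (mod 3); 3·(−1)^{n/3} if m ≡ 1 (mod 3); and 3 if m ≡ 2 (mod 3). -/
set_option linter.unusedSectionVars false
open Finset
open scoped Classical

set_option linter.unusedSectionVars false

namespace Q1Aux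

lemma z3a : ∀ c : ZMod 3, c ≠ c + 1 := by decide
lemma z3b : ∀ c : ZMod 3, c ≠ c + 2 := by decide
lemma z3c : ∀ c : ZMod 3, c + 1 ≠ c + 2 := by decide
lemma z3d : ∀ c : ZMod 3, c + 1 ≠ c := by decide
lemma z3e : ∀ c : ZMod 3, c + 1 + 1 ≠ c := by decide
lemma z3f : ∀ c : ZMod 3, c + 2 ≠ c + 1 := by decide

lemma tri : ∀ c d : ZMod 3, d = c ∨ d = c + 1 ∨ d = c + 2 := by decide

variable (n : ℕ) [NeZero n]

/-- independence of a single row in the cycle -/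
def indepC (ρ : Finset (ZMod n)) : Prop := ∀ j ∈ ρ, j + 1 ∉ ρ

/-- admissible next rows given the previous row occupied `Q` -/
noncomputable def Rows (Q : Finset (ZMod n)) : Finset (Finset (ZMod n)) :=
  univ.filter (fun ρ => indepC n ρ ∧ Disjoint ρ Q)

/-- row transfer sum -/
noncomputable def g : ℕ → Finset (ZMod n) → ℤ
  | 0, _ => 1
  | (k+1), Q => ∑ ρ ∈ Rows n Q, (-1) ^ ρ.card * g k ρ

lemma mem_Rows {Q ρ : Finset (ZMod n)} :
    ρ ∈ Rows n Q ↔ indepC n ρ ∧ Disjoint ρ Q := by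
  simp [Rows]

variable {n}

section Classes

variable (h3 : 3 ∣ n)

/-- class map -/
noncomputable def φ : ZMod n →+* ZMod 3 := ZMod.castHom h3 (ZMod 3)

/-- the residue class of c -/
noncomputable def P (c : ZMod 3) : Finset (ZMod n) :=
  univ.filter (fun j => φ h3 j = c)

lemma mem_P {c : ZMod 3} {j : ZMod n} : j ∈ P h3 c ↔ φ h3 j = c := by
  simp [P]

lemma phi_surj (c : ZMod 3) : ∃ x : ZMod n, φ h3 x = c := by
  refine ⟨(c.val : ZMod n), ?_⟩
  simp [φ, ZMod.natCast_val, ZMod.cast_id]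

lemma P_nonempty (c : ZMod 3) : (P h3 c).Nonempty := by
  obtain ⟨x, hx⟩ := phi_surj h3 c
  exact ⟨x, (mem_P h3).2 hx⟩

lemma one_ne_zero' (h3 : 3 ∣ n) : (1 : ZMod n) ≠ 0 := by
  intro h
  have h2 : (φ h3) 1 = (φ h3) 0 := by rw [h]
  rw [map_one, map_zero] at h2
  exact one_ne_zero h2

lemma add_one_ne (h3 : 3 ∣ n) (j : ZMod n) : j + 1 ≠ j := by
  intro h
  have : (1 : ZMod n) = 0 := by
    have := congrArg (fun t => t - j) h
    simpa [add_comm] using this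
  exact one_ne_zero' h3 this

lemma indep_subset_P {c : ZMod 3} {ρ : Finset (ZMod n)} (hρ : ρ ⊆ P h3 c) :
    indepC n ρ := by
  intro j hj hj1
  have h1 : φ h3 j = c := (mem_P h3).1 (hρ hj)
  have h2 : φ h3 (j+1) = c := (mem_P h3).1 (hρ hj1)
  rw [map_add, map_one, h1] at h2
  exact (by decide : ∀ c : ZMod 3, c + 1 ≠ c) c h2

lemma eq_P_of_indep_superset {c : ZMod 3} {ρ : Finset (ZMod n)}
    (hind : indepC n ρ) (hsub : P h3 c ⊆ ρ) : ρ = P h3 c := by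
  refine Finset.Subset.antisymm (fun x hx => ?_) hsub
  rcases tri c (φ h3 x) with h | h | h
  · exact (mem_P h3).2 h
  · exfalso
    have hx1 : x - 1 ∈ P h3 c := by
      rw [mem_P, map_sub, map_one, h]; ring
    have := hind (x-1) (hsub hx1)
    simp at this
    exact this hx
  · exfalso
    have hx1 : x + 1 ∈ P h3 c := by
      rw [mem_P, map_add, map_one, h]
      have : (3 : ZMod 3) = 0 := by decide
      linear_combination this
    exact hind x hx (hsub hx1)


lemma indepC_mono {ρ ρ' : Finset (ZMod n)} (h : ρ' ⊆ ρ) (hρ : indepC n ρ) :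
    indepC n ρ' := fun j hj hj1 => hρ j (h hj) (h hj1)

/-- generic: sum over sets containing `b` reindexes by removing `b` -/
lemma sum_mem_insert {α : Type*} [DecidableEq α] (s t : Finset (Finset α)) (b : α)
    (ht : ∀ ρ ∈ t, b ∉ ρ)
    (h1 : ∀ ρ ∈ s, b ∈ ρ → ρ.erase b ∈ t)
    (h2 : ∀ ρ ∈ t, insert b ρ ∈ s)
    (w : Finset α → ℤ) :
    ∑ ρ ∈ s.filter (fun ρ => b ∈ ρ), w ρ = ∑ ρ ∈ t, w (insert b ρ) := by
  refine Finset.sum_nbij' (fun ρ => ρ.erase b) (fun ρ => insert b ρ) ?_ ?_ ?_ ?_ ?_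
  · intro a ha; rw [mem_filter] at ha; exact h1 a ha.1 ha.2
  · intro a ha; rw [mem_filter]; exact ⟨h2 a ha, mem_insert_self _ _⟩
  · intro a ha; rw [mem_filter] at ha; exact Finset.insert_erase ha.2
  · intro a ha; exact Finset.erase_insert (ht a ha)
  · intro a ha; rw [mem_filter] at ha; rw [Finset.insert_erase ha.2]

lemma blockLemma (c : ZMod 3) : ∀ B : Finset (ZMod n), (∀ j ∈ B, φ h3 j = c + 1) →
    ∑ ρ ∈ univ.filter (fun ρ => indepC n ρ ∧ ρ ⊆ B ∪ B.image (fun j => j + 1)),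
      (-1:ℤ) ^ ρ.card = (-1) ^ B.card := by
  intro B
  induction B using Finset.induction_on with
  | empty =>
    intro _
    have he : univ.filter (fun ρ : Finset (ZMod n) => indepC n ρ ∧
        ρ ⊆ (∅ : Finset (ZMod n)) ∪ (∅ : Finset (ZMod n)).image (fun j => j + 1)) = {∅} := by
      ext ρ
      simp only [mem_filter, mem_univ, true_and, Finset.image_empty, Finset.union_empty,
        Finset.subset_empty, mem_singleton]
      constructor
      · rintro ⟨-, h⟩; exact h
      · rintro rfl; exact ⟨fun j hj => by simp at hj, rfl⟩
    rw [he]; simp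
  | @insert a B' ha IH =>
    intro hB
    have hB' : ∀ j ∈ B', φ h3 j = c + 1 := fun j hj => hB j (mem_insert_of_mem hj)
    have hBa : φ h3 a = c + 1 := hB a (mem_insert_self _ _)
    set U : Finset (ZMod n) := B' ∪ B'.image (fun j => j + 1) with hU
    have hUcl : ∀ x ∈ U, φ h3 x = c + 1 ∨ φ h3 x = c + 2 := by
      intro x hx
      rw [mem_union] at hx
      rcases hx with hx | hx
      · exact Or.inl (hB' x hx)
      · obtain ⟨j, hj, rfl⟩ := mem_image.1 hx
        right; rw [map_add, map_one, hB' j hj]; ring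
    have hUins : (insert a B') ∪ ((insert a B').image (fun j => j + 1)) =
        insert a (insert (a+1) U) := by
      ext x
      simp only [mem_union, mem_insert, mem_image, hU]
      constructor
      · rintro (h | ⟨j, (rfl | hj), rfl⟩)
        · rcases h with h | h
          · exact Or.inl h
          · exact Or.inr (Or.inr (Or.inl h))
        · exact Or.inr (Or.inl rfl)
        · exact Or.inr (Or.inr (Or.inr ⟨j, hj, rfl⟩))
      · rintro (rfl | rfl | h | ⟨j, hj, rfl⟩)
        · exact Or.inl (Or.inl rfl)
        · exact Or.inr ⟨a, Or.inl rfl, rfl⟩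
        · exact Or.inl (Or.inr h)
        · exact Or.inr ⟨j, Or.inr hj, rfl⟩
    have c12 : (c + 1 : ZMod 3) ≠ c + 2 := z3c c
    have c21 : (c + 2 : ZMod 3) ≠ c + 1 := fun h => c12 h.symm
    have cne : ∀ x : ZMod n, φ h3 x = c → x ∉ insert a (insert (a+1) U) := by
      intro x hx hmem
      rw [mem_insert, mem_insert] at hmem
      rcases hmem with rfl | rfl | hmem
      · rw [hx] at hBa; exact z3a c hBa
      · rw [map_add, map_one, hBa] at hx
        exact z3e c hx
      · rcases hUcl x hmem with h | h <;> rw [hx] at h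
        · exact z3a c h
        · exact z3b c h
    have haU : a ∉ U := by
      intro h
      rw [hU, mem_union] at h
      rcases h with h | h
      · exact ha h
      · obtain ⟨j, hj, hje⟩ := mem_image.1 h
        have h2 := congrArg (φ h3) hje
        rw [map_add, map_one, hB' j hj, hBa] at h2
        exact (by decide : ∀ c : ZMod 3, c + 1 + 1 ≠ c + 1) c h2
    have ha1U : a + 1 ∉ U := by
      intro h
      rw [hU, mem_union] at h
      rcases h with h | h
      · have h2 := hB' _ h
        rw [map_add, map_one, hBa] at h2
        have : (c + 2 : ZMod 3) = c + 1 := by linear_combination h2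
        exact z3f c this
      · obtain ⟨j, hj, hje⟩ := mem_image.1 h
        have : j = a := by
          have := add_right_cancel hje
          exact this
        subst this
        exact ha hj
    have haa1 : a ≠ a + 1 := fun h => add_one_ne h3 a h.symm
    -- sums
    set w : Finset (ZMod n) → ℤ := fun ρ => (-1) ^ ρ.card with hw
    set s0 := univ.filter (fun ρ : Finset (ZMod n) => indepC n ρ ∧ ρ ⊆ U) with hs0
    set s' := univ.filter (fun ρ : Finset (ZMod n) => indepC n ρ ∧
      ρ ⊆ insert a (insert (a+1) U)) with hs'
    have hS0 : ∑ ρ ∈ s0, w ρ = (-1) ^ B'.card := IH hB'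
    have hsub_mem : ∀ ρ : Finset (ZMod n), ρ ∈ s0 ↔ indepC n ρ ∧ ρ ⊆ U := by
      intro ρ; simp [hs0]
    have hsub_mem' : ∀ ρ : Finset (ZMod n), ρ ∈ s' ↔ indepC n ρ ∧
        ρ ⊆ insert a (insert (a+1) U) := by
      intro ρ; simp [hs']
    have hUP : ∀ x ∈ U, x ≠ a ∧ x ≠ a + 1 := by
      intro x hx
      constructor
      · rintro rfl; exact haU hx
      · rintro rfl; exact ha1U hx
    -- part 1 : a+1 ∈ ρ
    have key1 : ∑ ρ ∈ s'.filter (fun ρ => (a+1) ∈ ρ), w ρ = - ∑ ρ ∈ s0, w ρ := by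
      rw [sum_mem_insert s' s0 (a+1) (fun ρ hρ => fun hc => ha1U (((hsub_mem ρ).1 hρ).2 hc))
        ?_ ?_ w]
      · rw [← Finset.sum_neg_distrib]
        refine Finset.sum_congr rfl (fun ρ hρ => ?_)
        have hb : (a+1) ∉ ρ := fun hc => ha1U (((hsub_mem ρ).1 hρ).2 hc)
        simp only [hw, Finset.card_insert_of_notMem hb, pow_succ]
        ring
      · intro ρ hρ hb
        obtain ⟨hind, hsub⟩ := (hsub_mem' ρ).1 hρ
        have hano : a ∉ ρ := fun hc => hind a hc hb
        rw [hsub_mem]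
        refine ⟨indepC_mono (Finset.erase_subset _ _) hind, fun x hx => ?_⟩
        rw [Finset.mem_erase] at hx
        have := hsub hx.2
        rw [mem_insert, mem_insert] at this
        rcases this with rfl | h | h
        · exact absurd hx.2 hano
        · exact absurd h hx.1
        · exact h
      · intro ρ hρ
        obtain ⟨hind, hsub⟩ := (hsub_mem ρ).1 hρ
        rw [hsub_mem']
        constructor
        · intro j hj
          rw [mem_insert] at hj
          rcases hj with hj | hj
          · subst hj
            intro hc
            rw [mem_insert] at hc
            rcases hc with hc | hc
            · exact add_one_ne h3 (a+1) hc
            · rcases hUcl _ (hsub hc) with h | h <;>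
                simp only [map_add, map_one, hBa] at h
              · exact (by decide : ∀ c : ZMod 3, ¬(c + 1 + 1 + 1 = c + 1)) c h
              · exact (by decide : ∀ c : ZMod 3, ¬(c + 1 + 1 + 1 = c + 2)) c h
          · intro hc
            rw [mem_insert] at hc
            rcases hc with hc | hc
            · have hja : j = a := add_right_cancel hc
              rw [hja] at hj
              exact haU (hsub hj)
            · exact hind j hj hc
        · intro x hx
          rw [mem_insert] at hx
          rcases hx with rfl | hx
          · exact mem_insert_of_mem (mem_insert_self _ _)
          · exact mem_insert_of_mem (mem_insert_of_mem (hsub hx))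
    -- part 2 : a+1 ∉ ρ, a ∈ ρ
    set s'' := s'.filter (fun ρ => (a+1) ∉ ρ) with hs''
    have hsub_mem'' : ∀ ρ : Finset (ZMod n), ρ ∈ s'' ↔ (indepC n ρ ∧
        ρ ⊆ insert a (insert (a+1) U)) ∧ (a+1) ∉ ρ := by
      intro ρ; rw [hs'', mem_filter, hsub_mem']
    have key2 : ∑ ρ ∈ s''.filter (fun ρ => a ∈ ρ), w ρ = - ∑ ρ ∈ s0, w ρ := by
      rw [sum_mem_insert s'' s0 a (fun ρ hρ => fun hc => haU (((hsub_mem ρ).1 hρ).2 hc))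
        ?_ ?_ w]
      · rw [← Finset.sum_neg_distrib]
        refine Finset.sum_congr rfl (fun ρ hρ => ?_)
        have hb : a ∉ ρ := fun hc => haU (((hsub_mem ρ).1 hρ).2 hc)
        simp only [hw, Finset.card_insert_of_notMem hb, pow_succ]
        ring
      · intro ρ hρ hb
        obtain ⟨⟨hind, hsub⟩, ha1⟩ := (hsub_mem'' ρ).1 hρ
        rw [hsub_mem]
        refine ⟨indepC_mono (Finset.erase_subset _ _) hind, fun x hx => ?_⟩
        rw [Finset.mem_erase] at hx
        have := hsub hx.2
        rw [mem_insert, mem_insert] at this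
        rcases this with rfl | rfl | h
        · exact absurd rfl hx.1
        · exact absurd hx.2 ha1
        · exact h
      · intro ρ hρ
        obtain ⟨hind, hsub⟩ := (hsub_mem ρ).1 hρ
        have ha1ρ : (a+1) ∉ ρ := fun hc => ha1U (hsub hc)
        rw [hsub_mem'']
        refine ⟨⟨?_, ?_⟩, ?_⟩
        · intro j hj
          rw [mem_insert] at hj
          rcases hj with hj | hj
          · intro hc
            rw [mem_insert, hj] at hc
            rcases hc with hc | hc
            · exact add_one_ne h3 a hc
            · exact ha1ρ hc
          · intro hc
            rw [mem_insert] at hc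
            rcases hc with hc | hc
            · -- j + 1 = a with j ∈ U : impossible since φ j = c
              have hj' := congrArg (φ h3) hc
              rw [map_add, map_one, hBa] at hj'
              have hjc : φ h3 j = c := by linear_combination hj'
              rcases hUcl j (hsub hj) with h | h <;> rw [hjc] at h
              · exact z3a c h
              · exact z3b c h
            · exact hind j hj hc
        · intro x hx
          rw [mem_insert] at hx
          rcases hx with rfl | hx
          · exact mem_insert_self _ _
          · exact mem_insert_of_mem (mem_insert_of_mem (hsub hx))
        · rw [mem_insert]
          rintro (hc | hc)
          · exact add_one_ne h3 a hc
          · exact ha1ρ hc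
    -- part 3 : neither
    have key3 : s''.filter (fun ρ => a ∉ ρ) = s0 := by
      ext ρ
      rw [mem_filter, hsub_mem'', hsub_mem]
      constructor
      · rintro ⟨⟨⟨hind, hsub⟩, ha1⟩, ha0⟩
        refine ⟨hind, fun x hx => ?_⟩
        have := hsub hx
        rw [mem_insert, mem_insert] at this
        rcases this with rfl | rfl | h
        · exact absurd hx ha0
        · exact absurd hx ha1
        · exact h
      · rintro ⟨hind, hsub⟩
        exact ⟨⟨⟨hind, fun x hx => mem_insert_of_mem (mem_insert_of_mem (hsub hx))⟩,
          fun hc => ha1U (hsub hc)⟩, fun hc => haU (hsub hc)⟩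
    -- assemble
    rw [hUins]
    have goalsum : ∑ ρ ∈ s', w ρ = - (-1) ^ B'.card := by
      rw [← Finset.sum_filter_add_sum_filter_not s' (fun ρ => (a+1) ∈ ρ) w]
      rw [key1, hS0]
      have : ∑ ρ ∈ s'.filter (fun ρ => (a+1) ∉ ρ), w ρ = 0 := by
        rw [← Finset.sum_filter_add_sum_filter_not s'' (fun ρ => a ∈ ρ) w, key2, key3, hS0]
        ring
      rw [this]
      ring
    rw [Finset.card_insert_of_notMem ha, pow_succ]
    calc ∑ ρ ∈ univ.filter (fun ρ : Finset (ZMod n) => indepC n ρ ∧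
          ρ ⊆ insert a (insert (a+1) U)), (-1:ℤ) ^ ρ.card = ∑ ρ ∈ s', w ρ := by rw [hs', hw]
      _ = - (-1) ^ B'.card := goalsum
      _ = (-1) ^ B'.card * -1 := by ring


lemma g_zero (Q : Finset (ZMod n)) : g n 0 Q = 1 := rfl

lemma g_succ (k : ℕ) (Q : Finset (ZMod n)) :
    g n (k+1) Q = ∑ ρ ∈ Rows n Q, (-1) ^ ρ.card * g n k ρ := rfl

lemma card_P_eq (c d : ZMod 3) : (P h3 c).card = (P h3 d).card := by
  obtain ⟨t, ht⟩ := phi_surj h3 (d - c)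
  apply Finset.card_bij (fun x _ => x + t)
  · intro x hx
    rw [mem_P] at hx ⊢
    rw [map_add, ht, hx]; ring
  · intro x _ y _ hxy
    exact add_right_cancel hxy
  · intro y hy
    refine ⟨y - t, ?_, by ring⟩
    rw [mem_P] at hy ⊢
    rw [map_sub, ht, hy]; ring

lemma card_P (c : ZMod 3) : (P h3 c).card = n / 3 := by
  classical
  have h := Finset.card_eq_sum_card_fiberwise
    (f := fun x : ZMod n => φ h3 x) (s := univ) (t := univ) (fun x _ => mem_univ _)
  rw [Finset.card_univ, ZMod.card] at h
  have hP : ∀ d : ZMod 3, (univ.filter (fun a : ZMod n => φ h3 a = d)).card = (P h3 d).card := by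
    intro d
    congr 1
  rw [Finset.sum_congr rfl (fun d _ => hP d)] at h
  rw [Finset.sum_congr rfl (fun d _ => card_P_eq h3 d c)] at h
  rw [Finset.sum_const, Finset.card_univ] at h
  have h3card : Fintype.card (ZMod 3) = 3 := rfl
  rw [h3card] at h
  simp only [smul_eq_mul] at h
  omega

lemma A_eps (c : ZMod 3) :
    ∑ ρ ∈ Rows n (P h3 c), (-1:ℤ) ^ ρ.card = (-1) ^ (n / 3) := by
  have hB : ∀ j ∈ P h3 (c+1), φ h3 j = c + 1 := fun j hj => (mem_P h3).1 hj
  have hbl := blockLemma h3 c (P h3 (c+1)) hB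
  rw [card_P h3 (c+1)] at hbl
  rw [← hbl]
  apply Finset.sum_congr ?_ (fun _ _ => rfl)
  ext ρ
  rw [mem_Rows, mem_filter]
  simp only [mem_univ, true_and]
  constructor
  · rintro ⟨hind, hdisj⟩
    refine ⟨hind, fun x hx => ?_⟩
    have hxP : x ∉ P h3 c := Finset.disjoint_left.1 hdisj hx
    rw [mem_P] at hxP
    rcases tri c (φ h3 x) with h | h | h
    · exact absurd h hxP
    · exact mem_union_left _ ((mem_P h3).2 h)
    · refine mem_union_right _ (mem_image.2 ⟨x - 1, ?_, by ring⟩)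
      rw [mem_P, map_sub, map_one, h]; ring
  · rintro ⟨hind, hsub⟩
    refine ⟨hind, Finset.disjoint_left.2 fun x hx hxP => ?_⟩
    have hc : φ h3 x = c := (mem_P h3).1 hxP
    have := hsub hx
    rw [mem_union] at this
    rcases this with h | h
    · rw [(mem_P h3).1 h] at hc
      exact z3d c hc
    · obtain ⟨j, hj, rfl⟩ := mem_image.1 h
      rw [map_add, map_one, (mem_P h3).1 hj] at hc
      exact (by decide : ∀ c : ZMod 3, ¬(c + 1 + 1 = c)) c hc

lemma invol_zero (h3 : 3 ∣ n) (T : Finset (ZMod n)) (b : ZMod n)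
    (hb : b ∉ T) (hb1 : b + 1 ∈ T) (hbm : b - 1 ∈ T) :
    ∑ ρ ∈ Rows n T, (-1:ℤ) ^ ρ.card = 0 := by
  apply Finset.sum_involution (fun ρ _ => if b ∈ ρ then ρ.erase b else insert b ρ)
  · intro ρ hρ
    by_cases hbρ : b ∈ ρ
    · simp only [hbρ, if_true]
      rw [show ρ.card = (ρ.erase b).card + 1 by
        rw [← Finset.card_insert_of_notMem (Finset.notMem_erase b ρ),
          Finset.insert_erase hbρ]]
      rw [pow_succ]; ring
    · simp only [hbρ, if_false]
      rw [Finset.card_insert_of_notMem hbρ, pow_succ]; ring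
  · intro ρ _ _
    by_cases hbρ : b ∈ ρ
    · simp only [hbρ, if_true]
      intro h
      rw [← h] at hbρ
      exact Finset.notMem_erase b ρ hbρ
    · simp only [hbρ, if_false]
      intro h
      exact hbρ (h ▸ Finset.mem_insert_self b ρ)
  · intro ρ _
    by_cases hbρ : b ∈ ρ
    · simp [hbρ, Finset.notMem_erase, Finset.insert_erase]
    · simp [hbρ, Finset.erase_insert]
  · intro ρ hρ
    rw [mem_Rows] at hρ
    obtain ⟨hind, hdisj⟩ := hρ
    by_cases hbρ : b ∈ ρ
    · simp only [hbρ, if_true]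
      rw [mem_Rows]
      exact ⟨indepC_mono (Finset.erase_subset _ _) hind,
        Finset.disjoint_of_subset_left (Finset.erase_subset _ _) hdisj⟩
    · simp only [hbρ, if_false]
      rw [mem_Rows]
      refine ⟨?_, ?_⟩
      · intro j hj
        rw [mem_insert] at hj
        rcases hj with rfl | hj
        · intro hc
          rw [mem_insert] at hc
          rcases hc with hc | hc
          · exact add_one_ne h3 j hc
          · exact (Finset.disjoint_left.1 hdisj hc) hb1
        · intro hc
          rw [mem_insert] at hc
          rcases hc with hc | hc
          · have : j = b - 1 := by
              have := congrArg (fun t => t - 1) hc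
              simpa using this
            rw [this] at hj
            exact (Finset.disjoint_left.1 hdisj hj) hbm
          · exact hind j hj hc
      · rw [Finset.disjoint_left]
        intro x hx
        rw [mem_insert] at hx
        rcases hx with rfl | hx
        · exact hb
        · exact Finset.disjoint_left.1 hdisj hx

lemma A_gen (c : ZMod 3) (R : Finset (ZMod n)) (hR : indepC n R) :
    ∑ ρ ∈ Rows n (P h3 c ∪ R), (-1:ℤ) ^ ρ.card =
      if R ⊆ P h3 c then (-1) ^ (n / 3) else 0 := by
  by_cases hRP : R ⊆ P h3 c
  · rw [if_pos hRP, ← A_eps h3 c]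
    apply Finset.sum_congr ?_ (fun _ _ => rfl)
    ext ρ
    rw [mem_Rows, mem_Rows, Finset.disjoint_union_right]
    constructor
    · rintro ⟨hind, hd1, _⟩; exact ⟨hind, hd1⟩
    · rintro ⟨hind, hd⟩
      exact ⟨hind, hd, Finset.disjoint_of_subset_right hRP hd⟩
  · rw [if_neg hRP]
    obtain ⟨a, haR, haP⟩ := Finset.not_subset.1 hRP
    rw [mem_P] at haP
    rcases tri c (φ h3 a) with h | h | h
    · exact absurd h haP
    · -- b = a + 1
      apply invol_zero h3 _ (a+1)
      · rw [mem_union]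
        rintro (hc | hc)
        · rw [mem_P, map_add, map_one, h] at hc
          exact (by decide : ∀ c : ZMod 3, ¬(c + 1 + 1 = c)) c hc
        · exact hR a haR hc
      · rw [mem_union]
        left
        rw [mem_P, map_add, map_add, map_one, h]
        exact (by decide : ∀ c : ZMod 3, c + 1 + 1 + 1 = c) c
      · rw [mem_union]
        right
        simpa using haR
    · -- b = a - 1
      apply invol_zero h3 _ (a-1)
      · rw [mem_union]
        rintro (hc | hc)
        · rw [mem_P, map_sub, map_one, h] at hc
          exact (by decide : ∀ c : ZMod 3, ¬(c + 2 - 1 = c)) c hc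
        · have := hR (a-1) hc
          rw [sub_add_cancel] at this
          exact this haR
      · rw [mem_union]
        right
        rw [sub_add_cancel]
        exact haR
      · rw [mem_union]
        left
        rw [mem_P, map_sub, map_sub, map_one, h]
        exact (by decide : ∀ c : ZMod 3, c + 2 - 1 - 1 = c) c


lemma Rows_eq_filter (Q : Finset (ZMod n)) :
    Rows n Q = (univ.filter (fun ρ : Finset (ZMod n) => indepC n ρ)).filter
      (fun ρ => Disjoint ρ Q) := by
  rw [Rows, Finset.filter_filter]

lemma expand_sum (Q : Finset (ZMod n)) (X : Finset (ZMod n) → ℤ) :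
    ∑ ρ ∈ Rows n Q, X ρ =
      ∑ ρ ∈ univ.filter (fun ρ : Finset (ZMod n) => indepC n ρ),
        if Disjoint ρ Q then X ρ else 0 := by
  rw [Rows_eq_filter, Finset.sum_filter]

lemma gstep (c : ZMod 3) (k : ℕ) :
    g n (k+2) (P h3 c) = (-1)^(n/3) *
      ∑ ρ ∈ (P h3 c).powerset, (-1:ℤ)^ρ.card * g n k ρ := by
  have e1 : g n (k+2) (P h3 c) = ∑ ρ ∈ Rows n (P h3 c),
      ∑ ρ' ∈ univ.filter (fun ρ' : Finset (ZMod n) => indepC n ρ'),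
        (if Disjoint ρ' ρ then ((-1:ℤ)^ρ.card) else 0) * ((-1:ℤ)^ρ'.card * g n k ρ') := by
    rw [g_succ]
    refine Finset.sum_congr rfl (fun ρ _ => ?_)
    rw [g_succ, Finset.mul_sum,
      expand_sum ρ (fun ρ' => (-1:ℤ)^ρ.card * ((-1:ℤ)^ρ'.card * g n k ρ'))]
    refine Finset.sum_congr rfl (fun ρ' _ => ?_)
    split <;> ring
  rw [e1, Finset.sum_comm]
  have e2 : ∀ ρ' ∈ univ.filter (fun ρ' : Finset (ZMod n) => indepC n ρ'),
      ∑ ρ ∈ Rows n (P h3 c),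
        (if Disjoint ρ' ρ then ((-1:ℤ)^ρ.card) else 0) * ((-1:ℤ)^ρ'.card * g n k ρ') =
      (if ρ' ⊆ P h3 c then ((-1:ℤ)^(n/3)) else 0) * ((-1:ℤ)^ρ'.card * g n k ρ') := by
    intro ρ' hρ'
    rw [mem_filter] at hρ'
    rw [← Finset.sum_mul]
    congr 1
    rw [← Finset.sum_filter]
    have hset : (Rows n (P h3 c)).filter (fun ρ => Disjoint ρ' ρ) = Rows n (P h3 c ∪ ρ') := by
      ext ρ
      rw [mem_filter, mem_Rows, mem_Rows, Finset.disjoint_union_right]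
      constructor
      · rintro ⟨⟨hind, hd⟩, hd'⟩
        exact ⟨hind, hd, hd'.symm⟩
      · rintro ⟨hind, hd, hd'⟩
        exact ⟨⟨hind, hd⟩, hd'.symm⟩
    rw [hset]
    exact A_gen h3 c ρ' hρ'.2
  rw [Finset.sum_congr rfl e2, Finset.mul_sum]
  have e3 : (univ.filter (fun ρ' : Finset (ZMod n) => indepC n ρ')).filter
      (fun ρ' => ρ' ⊆ P h3 c) = (P h3 c).powerset := by
    ext ρ'
    rw [mem_filter, mem_filter, Finset.mem_powerset]
    constructor
    · rintro ⟨_, hsub⟩; exact hsub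
    · intro hsub
      exact ⟨⟨mem_univ _, indep_subset_P h3 hsub⟩, hsub⟩
  calc ∑ ρ' ∈ univ.filter (fun ρ' : Finset (ZMod n) => indepC n ρ'),
        (if ρ' ⊆ P h3 c then ((-1:ℤ)^(n/3)) else 0) * ((-1:ℤ)^ρ'.card * g n k ρ')
      = ∑ ρ' ∈ univ.filter (fun ρ' : Finset (ZMod n) => indepC n ρ'),
        (if ρ' ⊆ P h3 c then ((-1:ℤ)^(n/3)) * ((-1:ℤ)^ρ'.card * g n k ρ') else 0) := by
        refine Finset.sum_congr rfl (fun ρ' _ => ?_)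
        split <;> ring
    _ = ∑ ρ' ∈ (univ.filter (fun ρ' : Finset (ZMod n) => indepC n ρ')).filter
          (fun ρ' => ρ' ⊆ P h3 c), ((-1:ℤ)^(n/3)) * ((-1:ℤ)^ρ'.card * g n k ρ') := by
        exact (Finset.sum_filter _ _).symm
    _ = ∑ ρ' ∈ (P h3 c).powerset, ((-1:ℤ)^(n/3)) * ((-1:ℤ)^ρ'.card * g n k ρ') := by
        rw [e3]

lemma g_one (c : ZMod 3) : g n 1 (P h3 c) = (-1)^(n/3) := by
  rw [g_succ]
  simp only [g_zero, mul_one]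
  exact A_eps h3 c

lemma g_two (c : ZMod 3) : g n 2 (P h3 c) = 0 := by
  rw [show (2:ℕ) = 0 + 2 from rfl, gstep h3 c 0]
  simp only [g_zero, mul_one]
  rw [Finset.sum_powerset_neg_one_pow_card]
  rw [if_neg (Finset.nonempty_iff_ne_empty.1 (P_nonempty h3 c))]
  ring

lemma g_per (c : ZMod 3) (k : ℕ) : g n (k+3) (P h3 c) = g n k (P h3 c) := by
  rw [show k + 3 = (k+1)+2 from rfl, gstep h3 c (k+1)]
  have e1 : ∀ ρ ∈ (P h3 c).powerset, (-1:ℤ)^ρ.card * g n (k+1) ρ =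
      ∑ ρ'' ∈ univ.filter (fun ρ'' : Finset (ZMod n) => indepC n ρ''),
        (if Disjoint ρ'' ρ then (-1:ℤ)^ρ.card else 0) * ((-1:ℤ)^ρ''.card * g n k ρ'') := by
    intro ρ _
    rw [g_succ, Finset.mul_sum,
      expand_sum ρ (fun ρ'' => (-1:ℤ)^ρ.card * ((-1:ℤ)^ρ''.card * g n k ρ''))]
    refine Finset.sum_congr rfl (fun ρ'' _ => ?_)
    split <;> ring
  rw [Finset.sum_congr rfl e1, Finset.sum_comm]
  have e2 : ∀ ρ'' ∈ univ.filter (fun ρ'' : Finset (ZMod n) => indepC n ρ''),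
      ∑ ρ ∈ (P h3 c).powerset,
        (if Disjoint ρ'' ρ then (-1:ℤ)^ρ.card else 0) * ((-1:ℤ)^ρ''.card * g n k ρ'') =
      (if ρ'' = P h3 c then ((-1:ℤ)^(n/3) * g n k (P h3 c)) else 0) := by
    intro ρ'' hρ''
    rw [mem_filter] at hρ''
    rw [← Finset.sum_mul, ← Finset.sum_filter]
    have hset : ((P h3 c).powerset).filter (fun ρ => Disjoint ρ'' ρ) =
        ((P h3 c) \ ρ'').powerset := by
      ext ρ
      rw [mem_filter, Finset.mem_powerset, Finset.mem_powerset]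
      constructor
      · rintro ⟨hsub, hd⟩
        intro x hx
        rw [Finset.mem_sdiff]
        exact ⟨hsub hx, fun hc => Finset.disjoint_right.1 hd hx hc⟩
      · intro hsub
        constructor
        · exact hsub.trans (Finset.sdiff_subset)
        · rw [Finset.disjoint_right]
          intro x hx
          exact (Finset.mem_sdiff.1 (hsub hx)).2
    rw [hset, Finset.sum_powerset_neg_one_pow_card]
    by_cases he : ρ'' = P h3 c
    · subst he
      rw [if_pos, if_pos rfl]
      · rw [card_P h3 c]; ring
      · simp
    · rw [if_neg he, if_neg]
      · ring
      · rw [Finset.sdiff_eq_empty_iff_subset]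
        intro hc
        exact he (eq_P_of_indep_superset h3 hρ''.2 hc)
  rw [Finset.sum_congr rfl e2]
  have e4 : ∀ ρ'' ∈ univ.filter (fun ρ'' : Finset (ZMod n) => indepC n ρ''),
      (if ρ'' = P h3 c then ((-1:ℤ)^(n/3) * g n k (P h3 c)) else 0) =
      (if ρ'' = P h3 c then ((fun _ => (-1:ℤ)^(n/3) * g n k (P h3 c)) ρ'') else 0) := by
    intro _ _; rfl
  rw [Finset.sum_congr rfl e4, Finset.sum_ite_eq' _ (P h3 c)]
  rw [if_pos]
  · rw [← mul_assoc, ← pow_add]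
    have : Even (n/3 + n/3) := ⟨n/3, rfl⟩
    rw [this.neg_one_pow, one_mul]
  · rw [mem_filter]
    exact ⟨mem_univ _, indep_subset_P h3 (le_refl _)⟩

lemma g_val (c : ZMod 3) : ∀ k, g n k (P h3 c) =
    if k % 3 = 0 then 1 else if k % 3 = 1 then (-1)^(n/3) else 0
  | 0 => by simp [g_zero]
  | 1 => by simp [g_one h3 c]
  | 2 => by simp [g_two h3 c]
  | (k+3) => by
      rw [g_per h3 c k, g_val c k, Nat.add_mod_right]

end Classes

section Cyl

variable (n : ℕ) [NeZero n]

/-- unordered independence condition -/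
def indepH (σ : Finset (ℕ × ZMod n)) : Prop :=
  ∀ p ∈ σ, (p.1, p.2 + 1) ∉ σ ∧ (p.1 + 1, p.2) ∉ σ

noncomputable def Fm (m : ℕ) : Finset (ℕ × ZMod n) := (Finset.Icc 1 m) ×ˢ univ

noncomputable def Idx (m : ℕ) (Q : Finset (ZMod n)) : Finset (Finset (ℕ × ZMod n)) :=
  (Fm n m).powerset.filter (fun τ => indepH n τ ∧ Disjoint (piRow n τ) Q)

noncomputable def G (m : ℕ) (Q : Finset (ZMod n)) : ℤ := ∑ τ ∈ Idx n m Q, (-1:ℤ)^τ.card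

variable {n}

def up (τ : Finset (ℕ × ZMod n)) : Finset (ℕ × ZMod n) :=
  τ.image (fun p => (p.1 + 1, p.2))

noncomputable def down (τ : Finset (ℕ × ZMod n)) : Finset (ℕ × ZMod n) :=
  (τ.filter (fun p => 2 ≤ p.1)).image (fun p => (p.1 - 1, p.2))

def lift (ρ : Finset (ZMod n)) : Finset (ℕ × ZMod n) :=
  ρ.image (fun j => ((1:ℕ), j))

lemma mem_piRow {τ : Finset (ℕ × ZMod n)} {j : ZMod n} :
    j ∈ piRow n τ ↔ ((1:ℕ), j) ∈ τ := by
  simp only [piRow, Finset.mem_image, Finset.mem_filter]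
  constructor
  · rintro ⟨⟨a, b⟩, ⟨hmem, h1⟩, h2⟩
    dsimp at h1 h2
    subst h1; subst h2
    exact hmem
  · intro h
    exact ⟨(1, j), ⟨h, rfl⟩, rfl⟩

lemma mem_lift {ρ : Finset (ZMod n)} {p : ℕ × ZMod n} :
    p ∈ lift ρ ↔ p.1 = 1 ∧ p.2 ∈ ρ := by
  simp only [lift, Finset.mem_image]
  constructor
  · rintro ⟨j, hj, rfl⟩
    exact ⟨rfl, hj⟩
  · rintro ⟨h1, h2⟩
    exact ⟨p.2, h2, by rw [← h1]⟩

lemma mem_up {τ : Finset (ℕ × ZMod n)} {p : ℕ × ZMod n} :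
    p ∈ up τ ↔ ∃ q ∈ τ, q.1 + 1 = p.1 ∧ q.2 = p.2 := by
  simp only [up, Finset.mem_image]
  constructor
  · rintro ⟨q, hq, rfl⟩
    exact ⟨q, hq, rfl, rfl⟩
  · rintro ⟨q, hq, h1, h2⟩
    exact ⟨q, hq, by rw [Prod.ext_iff]; exact ⟨h1, h2⟩⟩

lemma mem_up' [NeZero n] {τ : Finset (ℕ × ZMod n)} {i : ℕ} {j : ZMod n} (hi : 1 ≤ i) :
    (i + 1, j) ∈ up τ ↔ (i, j) ∈ τ := by
  rw [mem_up]
  constructor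
  · rintro ⟨q, hq, h1, h2⟩
    have : q = (i, j) := by
      rw [Prod.ext_iff]
      exact ⟨by omega, h2⟩
    rw [← this]; exact hq
  · intro h
    exact ⟨(i, j), h, rfl, rfl⟩

lemma mem_down {τ : Finset (ℕ × ZMod n)} {i : ℕ} {j : ZMod n} :
    (i, j) ∈ down τ ↔ (i + 1, j) ∈ τ ∧ 1 ≤ i := by
  simp only [down, Finset.mem_image, Finset.mem_filter]
  constructor
  · rintro ⟨q, ⟨hq, h2⟩, he⟩
    rw [Prod.ext_iff] at he
    obtain ⟨he1, he2⟩ := he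
    dsimp at he1 he2
    have hq1 : q.1 = i + 1 := by omega
    have : q = (i+1, j) := by rw [Prod.ext_iff]; exact ⟨hq1, he2⟩
    rw [this] at hq
    exact ⟨hq, by omega⟩
  · rintro ⟨h, hi⟩
    refine ⟨(i+1, j), ⟨h, by omega⟩, ?_⟩
    rw [Prod.ext_iff]
    constructor
    · show i + 1 - 1 = i
      omega
    · rfl

lemma subset_Fm_iff {m : ℕ} {σ : Finset (ℕ × ZMod n)} :
    σ ⊆ Fm n m ↔ ∀ p ∈ σ, 1 ≤ p.1 ∧ p.1 ≤ m := by
  constructor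
  · intro h p hp
    have := h hp
    rw [Fm, Finset.mem_product, Finset.mem_Icc] at this
    exact this.1
  · intro h p hp
    rw [Fm, Finset.mem_product, Finset.mem_Icc]
    exact ⟨h p hp, mem_univ _⟩

lemma down_subset {m : ℕ} {τ : Finset (ℕ × ZMod n)} (hτ : τ ⊆ Fm n (m+1)) :
    down τ ⊆ Fm n m := by
  rw [subset_Fm_iff]
  rintro ⟨i, j⟩ hp
  rw [mem_down] at hp
  have := (subset_Fm_iff.1 hτ) _ hp.1
  dsimp at this
  constructor
  · exact hp.2
  · omega

lemma indepH_down {τ : Finset (ℕ × ZMod n)} (h : indepH n τ) : indepH n (down τ) := by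
  rintro ⟨i, j⟩ hp
  rw [mem_down] at hp
  constructor
  · intro hc
    rw [mem_down] at hc
    exact (h _ hp.1).1 hc.1
  · intro hc
    rw [show ((i, j).1 + 1, (i, j).2) = (i + 1, j) from rfl, mem_down] at hc
    have := (h _ hp.1).2
    dsimp at this
    exact this hc.1

lemma disj_piRow_down {τ : Finset (ℕ × ZMod n)} (h : indepH n τ) :
    Disjoint (piRow n (down τ)) (piRow n τ) := by
  rw [Finset.disjoint_left]
  intro j hj hj2
  rw [mem_piRow] at hj hj2
  rw [mem_down] at hj
  have := (h _ hj2).2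
  dsimp at this
  exact this hj.1

lemma piRow_union {m : ℕ} {ρ : Finset (ZMod n)} {τ : Finset (ℕ × ZMod n)}
    (hτ : τ ⊆ Fm n m) : piRow n (lift ρ ∪ up τ) = ρ := by
  ext j
  rw [mem_piRow, Finset.mem_union, mem_lift]
  constructor
  · rintro (h | h)
    · exact h.2
    · exfalso
      rw [mem_up] at h
      obtain ⟨q, hq, h1, _⟩ := h
      have := (subset_Fm_iff.1 hτ) _ hq
      omega
  · intro h
    exact Or.inl ⟨rfl, h⟩

lemma down_union {m : ℕ} {ρ : Finset (ZMod n)} {τ : Finset (ℕ × ZMod n)}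
    (hτ : τ ⊆ Fm n m) : down (lift ρ ∪ up τ) = τ := by
  ext ⟨i, j⟩
  rw [mem_down, Finset.mem_union, mem_lift]
  constructor
  · rintro ⟨(h | h), hi⟩
    · dsimp at h; omega
    · rw [mem_up] at h
      obtain ⟨q, hq, h1, h2⟩ := h
      have : q = (i, j) := by rw [Prod.ext_iff]; exact ⟨by omega, h2⟩
      rw [← this]; exact hq
  · intro h
    have hi : 1 ≤ i := ((subset_Fm_iff.1 hτ) _ h).1
    exact ⟨Or.inr ((mem_up' hi).2 h), hi⟩

lemma union_decomp {m : ℕ} {τ : Finset (ℕ × ZMod n)} (hτ : τ ⊆ Fm n (m+1)) :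
    lift (piRow n τ) ∪ up (down τ) = τ := by
  ext ⟨i, j⟩
  rw [Finset.mem_union, mem_lift]
  constructor
  · rintro (⟨h1, h2⟩ | h)
    · dsimp at h1 h2
      rw [mem_piRow] at h2
      rw [show ((i:ℕ), j) = (1, j) by rw [h1]]
      exact h2
    · rw [mem_up] at h
      obtain ⟨q, hq, h1, h2⟩ := h
      rw [mem_down] at hq
      have hq1 : (q.1 + 1, q.2) ∈ τ := hq.1
      have : (i, j) = (q.1 + 1, q.2) := by
        rw [Prod.ext_iff]; exact ⟨by omega, h2.symm⟩
      rw [this]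
      exact hq1
  · intro h
    by_cases hi : i = 1
    · subst hi
      exact Or.inl ⟨rfl, mem_piRow.2 h⟩
    · right
      have hb := (subset_Fm_iff.1 hτ) _ h
      dsimp at hb
      rw [mem_up]
      refine ⟨(i - 1, j), ?_, by dsimp; omega, rfl⟩
      rw [mem_down]
      have : i - 1 + 1 = i := by omega
      rw [this]
      exact ⟨h, by omega⟩

lemma card_union_lift_up {m : ℕ} {ρ : Finset (ZMod n)} {τ : Finset (ℕ × ZMod n)}
    (hτ : τ ⊆ Fm n m) : (lift ρ ∪ up τ).card = ρ.card + τ.card := by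
  rw [Finset.card_union_of_disjoint, lift, up,
    Finset.card_image_of_injective _ (fun a b h => by
      rw [Prod.ext_iff] at h; exact h.2),
    Finset.card_image_of_injective _ (fun a b h => by
      rw [Prod.ext_iff] at h
      obtain ⟨h1, h2⟩ := h
      exact Prod.ext (by omega) h2)]
  rw [Finset.disjoint_left]
  intro p hp hc
  rw [mem_lift] at hp
  rw [mem_up] at hc
  obtain ⟨q, hq, h1, _⟩ := hc
  have := (subset_Fm_iff.1 hτ) _ hq
  omega

lemma indepH_union {m : ℕ} {ρ : Finset (ZMod n)} {τ : Finset (ℕ × ZMod n)}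
    (hρ : indepC n ρ) (hτF : τ ⊆ Fm n m) (hτ : indepH n τ)
    (hd : Disjoint (piRow n τ) ρ) : indepH n (lift ρ ∪ up τ) := by
  rintro ⟨i, j⟩ hp
  rw [Finset.mem_union, mem_lift] at hp
  constructor
  · intro hc
    rw [Finset.mem_union, mem_lift] at hc
    dsimp at hc
    rcases hp with ⟨h1, h2⟩ | hp
    · dsimp at h1 h2
      subst h1
      rcases hc with ⟨_, hc2⟩ | hc
      · exact hρ j h2 hc2
      · rw [mem_up] at hc
        obtain ⟨q, hq, hq1, _⟩ := hc
        have := (subset_Fm_iff.1 hτF) _ hq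
        omega
    · rw [mem_up] at hp
      obtain ⟨q, hq, hq1, hq2⟩ := hp
      have hqb := (subset_Fm_iff.1 hτF) _ hq
      rcases hc with ⟨hc1, _⟩ | hc
      · omega
      · rw [mem_up] at hc
        obtain ⟨q', hq', hq'1, hq'2⟩ := hc
        have : q' = (q.1, q.2 + 1) := by
          dsimp at hq1 hq2 hq'1 hq'2
          rw [Prod.ext_iff]
          constructor
          · omega
          · dsimp
            rw [hq'2, hq2]
        rw [this] at hq'
        exact (hτ _ hq).1 hq'
  · intro hc
    rw [Finset.mem_union, mem_lift] at hc
    dsimp at hc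
    rcases hp with ⟨h1, h2⟩ | hp
    · dsimp at h1 h2
      subst h1
      rcases hc with ⟨hc1, _⟩ | hc
      · omega
      · rw [mem_up] at hc
        obtain ⟨q, hq, hq1, hq2⟩ := hc
        have : q = (1, j) := by
          rw [Prod.ext_iff]
          exact ⟨by dsimp; omega, hq2⟩
        rw [this] at hq
        have : j ∈ piRow n τ := mem_piRow.2 hq
        exact (Finset.disjoint_left.1 hd this) h2
    · rw [mem_up] at hp
      obtain ⟨q, hq, hq1, hq2⟩ := hp
      have hqb := (subset_Fm_iff.1 hτF) _ hq
      rcases hc with ⟨hc1, _⟩ | hc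
      · omega
      · rw [mem_up] at hc
        obtain ⟨q', hq', hq'1, hq'2⟩ := hc
        have : q' = (q.1 + 1, q.2) := by
          dsimp at hq1 hq2 hq'1 hq'2
          rw [Prod.ext_iff]
          constructor
          · omega
          · dsimp
            rw [hq'2, hq2]
        rw [this] at hq'
        exact (hτ _ hq).2 hq'

lemma union_subset_Fm {m : ℕ} {ρ : Finset (ZMod n)} {τ : Finset (ℕ × ZMod n)}
    (hτ : τ ⊆ Fm n m) : lift ρ ∪ up τ ⊆ Fm n (m+1) := by
  rw [subset_Fm_iff]
  intro p hp
  rw [Finset.mem_union, mem_lift] at hp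
  rcases hp with ⟨h1, _⟩ | hp
  · omega
  · rw [mem_up] at hp
    obtain ⟨q, hq, h1, _⟩ := hp
    have := (subset_Fm_iff.1 hτ) _ hq
    omega

lemma G_succ (m : ℕ) (Q : Finset (ZMod n)) :
    G n (m+1) Q = ∑ ρ ∈ Rows n Q, (-1:ℤ)^ρ.card * G n m ρ := by
  have : ∀ ρ ∈ Rows n Q, (-1:ℤ)^ρ.card * G n m ρ =
      ∑ τ ∈ Idx n m ρ, (-1:ℤ)^(ρ.card + τ.card) := by
    intro ρ _
    rw [G, Finset.mul_sum]
    exact Finset.sum_congr rfl (fun τ _ => by rw [pow_add])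
  rw [Finset.sum_congr rfl this, ← Finset.sum_sigma (Rows n Q) (fun ρ => Idx n m ρ)
    (fun x => (-1:ℤ)^(x.1.card + x.2.card))]
  rw [G]
  apply Finset.sum_nbij' (i := fun τ => (⟨piRow n τ, down τ⟩ : Σ _ : Finset (ZMod n), Finset (ℕ × ZMod n)))
    (j := fun x => lift x.1 ∪ up x.2)
  · intro τ hτ
    rw [Idx, mem_filter, Finset.mem_powerset] at hτ
    obtain ⟨hsub, hind, hdisj⟩ := hτ
    rw [Finset.mem_sigma, mem_Rows, Idx, mem_filter, Finset.mem_powerset]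
    refine ⟨⟨?_, hdisj⟩, down_subset hsub, indepH_down hind, disj_piRow_down hind⟩
    intro j hj hj1
    rw [mem_piRow] at hj hj1
    exact (hind _ hj).1 hj1
  · rintro ⟨ρ, τ⟩ hx
    rw [Finset.mem_sigma, mem_Rows, Idx, mem_filter, Finset.mem_powerset] at hx
    obtain ⟨⟨hρind, hρdisj⟩, hsub, hind, hdisj⟩ := hx
    rw [Idx, mem_filter, Finset.mem_powerset]
    refine ⟨union_subset_Fm hsub, indepH_union hρind hsub hind hdisj, ?_⟩
    rw [piRow_union hsub]
    exact hρdisj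
  · intro τ hτ
    rw [Idx, mem_filter, Finset.mem_powerset] at hτ
    exact union_decomp hτ.1
  · rintro ⟨ρ, τ⟩ hx
    rw [Finset.mem_sigma, Idx, mem_filter, Finset.mem_powerset] at hx
    obtain ⟨_, hsub, _, _⟩ := hx
    dsimp only
    rw [piRow_union hsub, down_union hsub]
  · intro τ hτ
    rw [Idx, mem_filter, Finset.mem_powerset] at hτ
    conv_lhs => rw [← union_decomp hτ.1]
    rw [card_union_lift_up (down_subset hτ.1)]

lemma G_zero (Q : Finset (ZMod n)) : G n 0 Q = 1 := by
  rw [G]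
  have : Idx n 0 Q = {∅} := by
    ext τ
    rw [Idx, mem_filter, Finset.mem_powerset, mem_singleton]
    constructor
    · rintro ⟨hsub, _, _⟩
      have : Fm n 0 = ∅ := by
        rw [Fm]
        rw [show Finset.Icc 1 0 = (∅ : Finset ℕ) from rfl]
        rfl
      rw [this, Finset.subset_empty] at hsub
      exact hsub
    · rintro rfl
      refine ⟨Finset.empty_subset _, fun p hp => absurd hp (Finset.notMem_empty p), ?_⟩
      have : piRow n (∅ : Finset (ℕ × ZMod n)) = ∅ := rfl
      rw [this]
      exact Finset.disjoint_empty_left _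
  rw [this, Finset.sum_singleton]
  rfl

lemma G_eq_g : ∀ (m : ℕ) (Q : Finset (ZMod n)), G n m Q = g n m Q := by
  intro m
  induction m with
  | zero => intro Q; rw [G_zero, g_zero]
  | succ k IH =>
    intro Q
    rw [G_succ, g_succ]
    exact Finset.sum_congr rfl (fun ρ _ => by rw [IH])

end Cyl

section Final

variable {n : ℕ} [NeZero n]

lemma cylIndep_iff (h3 : 3 ∣ n) {m : ℕ} {σ : Finset (ℕ × ZMod n)} :
    cylIndep m n σ ↔ σ ⊆ Fm n m ∧ indepH n σ := by
  constructor
  · rintro ⟨hb, hadj⟩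
    refine ⟨subset_Fm_iff.2 hb, fun p hp => ⟨?_, ?_⟩⟩
    · intro hc
      refine hadj p hp _ hc ⟨?_, Or.inl ⟨rfl, Or.inl rfl⟩⟩
      intro he
      rw [Prod.ext_iff] at he
      exact add_one_ne h3 p.2 he.2.symm
    · intro hc
      refine hadj p hp _ hc ⟨?_, Or.inr ⟨rfl, Or.inl rfl⟩⟩
      intro he
      rw [Prod.ext_iff] at he
      omega
  · rintro ⟨hsub, hind⟩
    refine ⟨fun v hv => (subset_Fm_iff.1 hsub) v hv, ?_⟩
    rintro v hv w hw ⟨hne, hadj⟩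
    rcases hadj with ⟨h1, h2 | h2⟩ | ⟨h1, h2 | h2⟩
    · have : w = (v.1, v.2 + 1) := by rw [Prod.ext_iff]; exact ⟨h1.symm, h2⟩
      rw [this] at hw
      exact (hind v hv).1 hw
    · have : v = (w.1, w.2 + 1) := by rw [Prod.ext_iff]; exact ⟨h1, h2⟩
      rw [this] at hv
      exact (hind w hw).1 hv
    · have : w = (v.1 + 1, v.2) := by rw [Prod.ext_iff]; exact ⟨h2.symm, h1.symm⟩
      rw [this] at hw
      exact (hind v hv).2 hw
    · have : v = (w.1 + 1, w.2) := by rw [Prod.ext_iff]; exact ⟨h2.symm, h1⟩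
      rw [this] at hv
      exact (hind w hw).2 hv

lemma cOffset_eq_three_iff {Ps : Finset (ZMod n)} {x : ZMod n} :
    cOffset n Ps x = 3 ↔ x - 1 ∉ Ps ∧ x - 2 ∉ Ps ∧ x - 3 ∈ Ps := by
  have hc1 : ((1:ℕ) : ZMod n) = 1 := by norm_num
  have hc2 : ((2:ℕ) : ZMod n) = 2 := by norm_num
  have hc3 : ((3:ℕ) : ZMod n) = 3 := by norm_num
  constructor
  · intro h
    rw [cOffset] at h
    have hne : {r : ℕ | 0 < r ∧ x - (r:ZMod n) ∈ Ps}.Nonempty := by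
      by_contra h'
      rw [Set.not_nonempty_iff_eq_empty] at h'
      rw [h', Nat.sInf_empty] at h
      omega
    have hmem := Nat.sInf_mem hne
    rw [h] at hmem
    have h1 : (1:ℕ) ∉ {r : ℕ | 0 < r ∧ x - (r:ZMod n) ∈ Ps} :=
      Nat.notMem_of_lt_sInf (by rw [h]; omega)
    have h2 : (2:ℕ) ∉ {r : ℕ | 0 < r ∧ x - (r:ZMod n) ∈ Ps} :=
      Nat.notMem_of_lt_sInf (by rw [h]; omega)
    rw [Set.mem_setOf_eq, hc1] at h1
    rw [Set.mem_setOf_eq, hc2] at h2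
    obtain ⟨-, hmem3⟩ := hmem
    rw [hc3] at hmem3
    exact ⟨fun hc => h1 ⟨by omega, hc⟩, fun hc => h2 ⟨by omega, hc⟩, hmem3⟩
  · rintro ⟨h1, h2, h3m⟩
    have h3S : (3:ℕ) ∈ {r : ℕ | 0 < r ∧ x - (r:ZMod n) ∈ Ps} := ⟨by omega, by rw [hc3]; exact h3m⟩
    have hle := Nat.sInf_le h3S
    have hmem := Nat.sInf_mem (⟨3, h3S⟩ : {r : ℕ | 0 < r ∧ x - (r:ZMod n) ∈ Ps}.Nonempty)
    obtain ⟨hpos, hin⟩ := hmem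
    rw [cOffset]
    have hcase : sInf {r : ℕ | 0 < r ∧ x - (r:ZMod n) ∈ Ps} = 1 ∨
        sInf {r : ℕ | 0 < r ∧ x - (r:ZMod n) ∈ Ps} = 2 ∨
        sInf {r : ℕ | 0 < r ∧ x - (r:ZMod n) ∈ Ps} = 3 := by omega
    rcases hcase with he | he | he
    · rw [he, hc1] at hin
      exact absurd hin h1
    · rw [he, hc2] at hin
      exact absurd hin h2
    · exact he

lemma phi_two (h3 : 3 ∣ n) : φ h3 (2 : ZMod n) = 2 := by
  have h : ((2:ℕ) : ZMod n) = 2 := by norm_num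
  rw [← h, map_natCast]
  norm_num

lemma phi_three (h3 : 3 ∣ n) : φ h3 (3 : ZMod n) = 0 := by
  have h : ((3:ℕ) : ZMod n) = 3 := by norm_num
  rw [← h, map_natCast]
  decide

lemma gaps_iff (h3 : 3 ∣ n) {Ps : Finset (ZMod n)} :
    (Ps.Nonempty ∧ ∀ x ∈ Ps, cOffset n Ps x = 3) ↔ ∃ c, Ps = P h3 c := by
  constructor
  · rintro ⟨⟨x₀, hx₀⟩, hall⟩
    refine ⟨φ h3 x₀, ?_⟩
    have hsub3 : ∀ x ∈ Ps, x - 3 ∈ Ps := fun x hx =>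
      ((cOffset_eq_three_iff).1 (hall x hx)).2.2
    have hA : ∀ k : ℕ, x₀ - 3*(k : ZMod n) ∈ Ps := by
      intro k
      induction k with
      | zero => simpa using hx₀
      | succ t IH =>
        have h' := hsub3 _ IH
        have he : x₀ - 3*(((t:ℕ)+1:ℕ) : ZMod n) = x₀ - 3*((t:ℕ) : ZMod n) - 3 := by
          push_cast
          ring
        rw [he]
        exact h'
    have hclass : ∀ y : ZMod n, φ h3 y = φ h3 x₀ → y ∈ Ps := by
      intro y hy
      have hvz : ((x₀ - y).val : ZMod n) = x₀ - y := by
        simp [ZMod.natCast_val, ZMod.cast_id]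
      have hz : φ h3 (x₀ - y) = 0 := by rw [map_sub, hy]; ring
      have hv : (((x₀ - y).val : ℕ) : ZMod 3) = 0 := by
        calc (((x₀ - y).val : ℕ) : ZMod 3) = φ h3 (((x₀-y).val : ℕ) : ZMod n) :=
              (map_natCast _ _).symm
          _ = φ h3 (x₀ - y) := by rw [hvz]
          _ = 0 := hz
      rw [ZMod.natCast_eq_zero_iff] at hv
      obtain ⟨t, ht⟩ := hv
      have hy2 : y = x₀ - 3*((t:ℕ) : ZMod n) := by
        have h4 : x₀ - y = 3*((t:ℕ):ZMod n) := by
          rw [← hvz, ht]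
          push_cast
          ring
        linear_combination -h4
      rw [hy2]
      exact hA t
    ext y
    rw [mem_P]
    constructor
    · intro hy
      rcases tri (φ h3 x₀) (φ h3 y) with h | h | h
      · exact h
      · exfalso
        have h1 : y - 1 ∈ Ps := hclass (y-1) (by rw [map_sub, map_one, h]; ring)
        exact ((cOffset_eq_three_iff).1 (hall y hy)).1 h1
      · exfalso
        have h1 : y - 2 ∈ Ps := hclass (y-2) (by
          rw [map_sub, phi_two h3, h]
          ring)
        exact ((cOffset_eq_three_iff).1 (hall y hy)).2.1 h1
    · exact hclass y
  · rintro ⟨c, rfl⟩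
    refine ⟨P_nonempty h3 c, fun x hx => ?_⟩
    have hx' := (mem_P h3).1 hx
    rw [cOffset_eq_three_iff]
    refine ⟨?_, ?_, ?_⟩
    · intro hc
      have := (mem_P h3).1 hc
      rw [map_sub, map_one, hx'] at this
      exact (by decide : ∀ c : ZMod 3, ¬(c - 1 = c)) c this
    · intro hc
      have := (mem_P h3).1 hc
      rw [map_sub, phi_two h3, hx'] at this
      exact (by decide : ∀ c : ZMod 3, ¬(c - 2 = c)) c this
    · rw [mem_P, map_sub, phi_three h3, hx']
      ring

end Final

section Final2

variable {n : ℕ} [NeZero n]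

lemma classSum (h3 : 3 ∣ n) (m' : ℕ) (c : ZMod 3) :
    ∑ σ ∈ (Fm n (m'+1)).powerset.filter
        (fun σ => indepH n σ ∧ piRow n σ = P h3 c), (-1:ℤ)^σ.card
      = (-1:ℤ)^(n/3) * G n m' (P h3 c) := by
  classical
  rw [G, Finset.mul_sum]
  apply Finset.sum_nbij' (i := fun σ => down σ) (j := fun τ => lift (P h3 c) ∪ up τ)
  · intro σ hσ
    rw [mem_filter, Finset.mem_powerset] at hσ
    obtain ⟨hsub, hind, hpi⟩ := hσ
    rw [Idx, mem_filter, Finset.mem_powerset]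
    refine ⟨down_subset hsub, indepH_down hind, ?_⟩
    rw [← hpi]
    exact disj_piRow_down hind
  · intro τ hτ
    rw [Idx, mem_filter, Finset.mem_powerset] at hτ
    obtain ⟨hsub, hind, hdisj⟩ := hτ
    rw [mem_filter, Finset.mem_powerset]
    exact ⟨union_subset_Fm hsub,
      indepH_union (indep_subset_P h3 (Finset.Subset.refl _)) hsub hind hdisj,
      piRow_union hsub⟩
  · intro σ hσ
    rw [mem_filter, Finset.mem_powerset] at hσ
    obtain ⟨hsub, _, hpi⟩ := hσ
    rw [← hpi]
    exact union_decomp hsub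
  · intro τ hτ
    rw [Idx, mem_filter, Finset.mem_powerset] at hτ
    exact down_union hτ.1
  · intro σ hσ
    rw [mem_filter, Finset.mem_powerset] at hσ
    obtain ⟨hsub, _, hpi⟩ := hσ
    conv_lhs => rw [← union_decomp hsub]
    rw [card_union_lift_up (down_subset hsub), hpi, card_P h3 c, pow_add]

end Final2

end Q1Aux


open Q1Aux

/-- For `m ≥ 1` and `n ≥ 3` divisible by 3, the sum of
`(−1)^{|σ|}` over all independent sets `σ` of `C_{m,n}` with `π(σ) ≠ ∅` and
every cyclic gap of `π(σ)` equal to 3 is `0`, `3·(−1)^{n/3}` or `3` according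
to whether `m ≡ 0, 1, 2 (mod 3)`. -/
theorem Q1_sum (m n : ℕ) (hm : 1 ≤ m) (hn : 3 ≤ n) (h3 : 3 ∣ n) :
    (m % 3 = 0 →
      (∑ᶠ σ ∈ {σ : Finset (ℕ × ZMod n) | cylIndep m n σ ∧ (piRow n σ).Nonempty ∧
          ∀ x ∈ piRow n σ, cOffset n (piRow n σ) x = 3}, (-1 : ℤ) ^ σ.card) = 0) ∧
    (m % 3 = 1 →
      (∑ᶠ σ ∈ {σ : Finset (ℕ × ZMod n) | cylIndep m n σ ∧ (piRow n σ).Nonempty ∧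
          ∀ x ∈ piRow n σ, cOffset n (piRow n σ) x = 3}, (-1 : ℤ) ^ σ.card) =
        3 * (-1 : ℤ) ^ (n / 3)) ∧
    (m % 3 = 2 →
      (∑ᶠ σ ∈ {σ : Finset (ℕ × ZMod n) | cylIndep m n σ ∧ (piRow n σ).Nonempty ∧
          ∀ x ∈ piRow n σ, cOffset n (piRow n σ) x = 3}, (-1 : ℤ) ^ σ.card) = 3) := by
  classical
  haveI : NeZero n := ⟨by omega⟩
  obtain ⟨m', rfl⟩ : ∃ m', m = m' + 1 := ⟨m - 1, by omega⟩
  set ε : ℤ := (-1:ℤ)^(n/3) with hε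
  have hεε : ε * ε = 1 := by
    rw [hε, ← pow_add]
    exact Even.neg_one_pow ⟨n/3, rfl⟩
  set V : ℤ := if m' % 3 = 0 then 1 else if m' % 3 = 1 then ε else 0 with hV
  set big : Finset (Finset (ℕ × ZMod n)) := (Fm n (m'+1)).powerset.filter
    (fun σ => cylIndep (m'+1) n σ ∧ (piRow n σ).Nonempty ∧
      ∀ x ∈ piRow n σ, cOffset n (piRow n σ) x = 3) with hbig
  have hset : {σ : Finset (ℕ × ZMod n) | cylIndep (m'+1) n σ ∧ (piRow n σ).Nonempty ∧
      ∀ x ∈ piRow n σ, cOffset n (piRow n σ) x = 3} = ↑big := by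
    ext σ
    rw [Set.mem_setOf_eq, hbig, Finset.coe_filter, Set.mem_setOf_eq, Finset.mem_powerset]
    constructor
    · intro h
      exact ⟨((cylIndep_iff h3).1 h.1).1, h⟩
    · exact fun h => h.2
  set clm : Finset (ℕ × ZMod n) → ZMod 3 := fun σ =>
    if h : (piRow n σ).Nonempty then φ h3 h.choose else 0 with hclm
  have classEq : ∀ c : ZMod 3, big.filter (fun σ => clm σ = c) =
      (Fm n (m'+1)).powerset.filter (fun σ => indepH n σ ∧ piRow n σ = P h3 c) := by
    intro c
    ext σ
    rw [mem_filter, hbig, mem_filter, Finset.mem_powerset, mem_filter, Finset.mem_powerset]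
    constructor
    · rintro ⟨⟨hsub, hcyl, hNE, hgap⟩, hclmc⟩
      obtain ⟨c', hc'⟩ := (gaps_iff h3).1 ⟨hNE, hgap⟩
      have : clm σ = c' := by
        rw [hclm]
        dsimp only
        rw [dif_pos hNE]
        have h2 : hNE.choose ∈ P h3 c' := by
          rw [← hc']
          exact hNE.choose_spec
        exact (mem_P h3).1 h2
      rw [hclmc] at this
      rw [← this] at hc'
      exact ⟨hsub, ((cylIndep_iff h3).1 hcyl).2, hc'⟩
    · rintro ⟨hsub, hind, hpi⟩
      have hgaps := (gaps_iff h3).2 ⟨c, hpi⟩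
      refine ⟨⟨hsub, (cylIndep_iff h3).2 ⟨hsub, hind⟩, hgaps.1, hgaps.2⟩, ?_⟩
      rw [hclm]
      dsimp only
      rw [dif_pos hgaps.1]
      have h2 : hgaps.1.choose ∈ P h3 c := by
        rw [← hpi]
        exact hgaps.1.choose_spec
      exact (mem_P h3).1 h2
  have hKEY : (∑ᶠ σ ∈ {σ : Finset (ℕ × ZMod n) | cylIndep (m'+1) n σ ∧ (piRow n σ).Nonempty ∧
      ∀ x ∈ piRow n σ, cOffset n (piRow n σ) x = 3}, (-1 : ℤ) ^ σ.card) = 3 * (ε * V) := by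
    rw [hset, finsum_mem_coe_finset]
    rw [← Finset.sum_fiberwise big clm (fun σ => (-1:ℤ)^σ.card)]
    have hterm : ∀ c : ZMod 3, ∑ σ ∈ big.filter (fun σ => clm σ = c), (-1:ℤ)^σ.card
        = ε * V := by
      intro c
      rw [classEq c, classSum h3 m' c, G_eq_g, hε, hV]
      rw [g_val h3 c m']
    rw [Finset.sum_congr rfl (fun c _ => hterm c)]
    rw [Finset.sum_const, Finset.card_univ]
    rw [show Fintype.card (ZMod 3) = 3 from rfl]
    rw [nsmul_eq_mul]
    norm_num
  refine ⟨fun h0 => ?_, fun h1 => ?_, fun h2 => ?_⟩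
  · rw [hKEY]
    have : m' % 3 = 2 := by omega
    rw [hV, if_neg (by omega), if_neg (by omega)]
    ring
  · rw [hKEY]
    have : m' % 3 = 0 := by omega
    rw [hV, if_pos this, hε]
    ring
  · rw [hKEY]
    have : m' % 3 = 1 := by omega
    rw [hV, if_neg (by omega), if_pos this, hεε]
    norm_num
end

section
/- Let m ≥ 3, let j satisfy 2 ≤ j ≤ m−1, and let A ⊆ {1,…,m} with {j−1, j, j+1} ⊆ A; set B := A ∖ {j}. Then Z(P_{m,n}(A,A)) = Z(P_{m,n}(B,B)) for every n ≥ 2, and consequently G_{A,A}(t) + G_{B,B}(t) = 2 as formal power series in ℤ[[t]]. -/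
/-- Adjacency in the square grid graph on ℤ²: `v` and `w` are adjacent iff
`|v₁ − w₁| + |v₂ − w₂| = 1`. -/
def gridAdj (v w : ℤ × ℤ) : Prop :=
  (v.1 - w.1).natAbs + (v.2 - w.2).natAbs = 1

/-- `σ` is an `(A,B)`-configuration on the parallelogram `P_{m,n}`:
an independent set of the induced subgraph of the grid on
`{(a,b) : 1 ≤ a ≤ m, 1 − a < b ≤ 1 − a + n}` whose trace on the left boundary
`{(a, 2−a)}` is prescribed by `A` and on the right boundary `{(a, 1−a+n)}`
by `B`. -/
def ParaConfig (m n : ℕ) (A B : Finset ℕ) (σ : Finset (ℤ × ℤ)) : Prop :=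
  (∀ p ∈ σ, 1 ≤ p.1 ∧ p.1 ≤ (m : ℤ) ∧ 1 - p.1 < p.2 ∧ p.2 ≤ 1 - p.1 + (n : ℤ)) ∧
  (∀ v ∈ σ, ∀ w ∈ σ, ¬ gridAdj v w) ∧
  (∀ a : ℕ, 1 ≤ a → a ≤ m →
    ((((a : ℤ), 2 - (a : ℤ)) ∈ σ ↔ a ∈ A) ∧
     (((a : ℤ), 1 - (a : ℤ) + (n : ℤ)) ∈ σ ↔ a ∈ B)))

/-- `Z(P_{m,n}(A,B)) = Σ_σ (−1)^{|σ|}` over all `(A,B)`-configurations `σ`. -/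
noncomputable def Zpara (m n : ℕ) (A B : Finset ℕ) : ℤ :=
  ∑ᶠ σ ∈ {σ : Finset (ℤ × ℤ) | ParaConfig m n A B σ}, (-1 : ℤ) ^ σ.card

/-- The generating function
`G_{A,A}(t) = 1 + (−1)^{|A|} Σ_{n ≥ 1} Z(P_{m,n+1}(A,A)) tⁿ ∈ ℤ[[t]]`. -/
noncomputable def Gser (m : ℕ) (A : Finset ℕ) : PowerSeries ℤ :=
  PowerSeries.mk fun k => if k = 0 then 1 else (-1 : ℤ) ^ A.card * Zpara m (k + 1) A A

private lemma zpara_step (m n j : ℕ) (hj1 : 2 ≤ j) (hjm : j + 1 ≤ m) (hn : 2 ≤ n)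
    (A : Finset ℕ) (hjA : j ∈ A) (hA1 : j - 1 ∈ A) (hA2 : j + 1 ∈ A) :
    Zpara m n A A = Zpara m n (A.erase j) (A.erase j) := by
  have hB1 : j - 1 ∈ A.erase j := Finset.mem_erase.2 ⟨by omega, hA1⟩
  have hB2 : j + 1 ∈ A.erase j := Finset.mem_erase.2 ⟨by omega, hA2⟩
  have hBj : j ∉ A.erase j := Finset.notMem_erase j A
  rcases eq_or_lt_of_le hn with hn2 | hn3
  · -- n = 2 : both sets of configurations are empty
    have hSA : {σ : Finset (ℤ × ℤ) | ParaConfig m n A A σ} = ∅ := by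
      ext σ
      simp only [Set.mem_setOf_eq, Set.mem_empty_iff_false, iff_false]
      rintro ⟨hreg, hind, hbd⟩
      have hb := hbd j (by omega) (by omega)
      exact hind _ (hb.1.mpr hjA) _ (hb.2.mpr hjA) (by simp [gridAdj]; omega)
    have hSB : {σ : Finset (ℤ × ℤ) | ParaConfig m n (A.erase j) (A.erase j) σ} = ∅ := by
      ext σ
      simp only [Set.mem_setOf_eq, Set.mem_empty_iff_false, iff_false]
      rintro ⟨hreg, hind, hbd⟩
      have hb := hbd (j-1) (by omega) (by omega)
      exact hind _ (hb.1.mpr hB1) _ (hb.2.mpr hB1) (by simp [gridAdj]; omega)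
    rw [Zpara, Zpara, hSA, hSB]
  · -- 3 ≤ n
    set p1 : ℤ × ℤ := ((j:ℤ), 2 - (j:ℤ)) with hp1
    set p2 : ℤ × ℤ := ((j:ℤ), 1 - (j:ℤ) + (n:ℤ)) with hp2
    have hpne : p1 ≠ p2 := by
      simp only [hp1, hp2, Prod.mk.injEq, ne_eq, not_and]; intro _; omega
    have hmem : ∀ σ : Finset (ℤ×ℤ), ParaConfig m n A A σ → p1 ∈ σ ∧ p2 ∈ σ := by
      rintro σ ⟨hreg, hind, hbd⟩
      exact ⟨(hbd j (by omega) (by omega)).1.mpr hjA, (hbd j (by omega) (by omega)).2.mpr hjA⟩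
    have recov : ∀ σ : Finset (ℤ×ℤ), ParaConfig m n A A σ →
        insert p1 (insert p2 ((σ.erase p1).erase p2)) = σ := by
      intro σ hσ
      obtain ⟨h1, h2⟩ := hmem σ hσ
      rw [Finset.insert_erase (Finset.mem_erase.2 ⟨Ne.symm hpne, h2⟩), Finset.insert_erase h1]
    rw [Zpara, Zpara]
    refine finsum_mem_eq_of_bijOn (fun σ => (σ.erase p1).erase p2) ⟨?_, ?_, ?_⟩ ?_
    · -- MapsTo
      rintro σ ⟨hreg, hind, hbd⟩
      have hsubs : ∀ p ∈ (σ.erase p1).erase p2, p ∈ σ := fun p hp =>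
        Finset.mem_of_mem_erase (Finset.mem_of_mem_erase hp)
      refine ⟨fun p hp => hreg p (hsubs p hp),
        fun v hv w hw => hind v (hsubs v hv) w (hsubs w hw), ?_⟩
      intro a ha1 ha2
      constructor
      · rcases eq_or_ne a j with rfl | haj
        · show p1 ∈ _ ↔ _
          simp [Finset.mem_erase]
        · have e1 : ((a:ℤ), 2-(a:ℤ)) ≠ p1 := by
            simp only [hp1, Prod.mk.injEq, ne_eq, not_and]; intro h; omega
          have e2 : ((a:ℤ), 2-(a:ℤ)) ≠ p2 := by
            simp only [hp2, Prod.mk.injEq, ne_eq, not_and]; intro h; omega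
          rw [Finset.mem_erase, Finset.mem_erase]
          simp only [e1, e2, ne_eq, not_false_iff, true_and]
          rw [(hbd a ha1 ha2).1, Finset.mem_erase]
          simp [haj]
      · rcases eq_or_ne a j with rfl | haj
        · show p2 ∈ _ ↔ _
          simp [Finset.mem_erase]
        · have e1 : ((a:ℤ), 1-(a:ℤ)+(n:ℤ)) ≠ p1 := by
            simp only [hp1, Prod.mk.injEq, ne_eq, not_and]; intro h; omega
          have e2 : ((a:ℤ), 1-(a:ℤ)+(n:ℤ)) ≠ p2 := by
            simp only [hp2, Prod.mk.injEq, ne_eq, not_and]; intro h; omega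
          rw [Finset.mem_erase, Finset.mem_erase]
          simp only [e1, e2, ne_eq, not_false_iff, true_and]
          rw [(hbd a ha1 ha2).2, Finset.mem_erase]
          simp [haj]
    · -- InjOn
      rintro σ1 h1 σ2 h2 he
      have := recov σ1 h1
      rw [← recov σ1 h1, ← recov σ2 h2]
      simp only at he
      rw [he]
    · -- SurjOn
      rintro τ ⟨hreg, hind, hbd⟩
      have hbj := hbd j (by omega) (by omega)
      have hp1τ : p1 ∉ τ := fun h => hBj (hbj.1.mp h)
      have hp2τ : p2 ∉ τ := fun h => hBj (hbj.2.mp h)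
      have hbjm := hbd (j-1) (by omega) (by omega)
      have hbjp := hbd (j+1) (by omega) (by omega)
      have hLb : ((↑(j-1):ℤ), 2 - (↑(j-1):ℤ)) ∈ τ := hbjm.1.mpr hB1
      have hLb2 : ((↑(j+1):ℤ), 2 - (↑(j+1):ℤ)) ∈ τ := hbjp.1.mpr hB2
      have hRb : ((↑(j-1):ℤ), 1 - (↑(j-1):ℤ) + (n:ℤ)) ∈ τ := hbjm.2.mpr hB1
      have hRb2 : ((↑(j+1):ℤ), 1 - (↑(j+1):ℤ) + (n:ℤ)) ∈ τ := hbjp.2.mpr hB2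
      have hq1 : ((j:ℤ), 3 - (j:ℤ)) ∉ τ := fun h =>
        hind _ h _ hLb (by simp [gridAdj]; omega)
      have hq2 : ((j:ℤ)+1, 2 - (j:ℤ)) ∉ τ := fun h =>
        hind _ h _ hLb2 (by simp only [gridAdj]; omega)
      have hq3 : ((j:ℤ), -(j:ℤ) + (n:ℤ)) ∉ τ := fun h =>
        hind _ h _ hRb2 (by simp only [gridAdj]; omega)
      have hq4 : ((j:ℤ)-1, 1 - (j:ℤ) + (n:ℤ)) ∉ τ := fun h =>
        hind _ h _ hRb (by simp [gridAdj]; omega)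
      have key1 : ∀ w ∈ τ, ¬ gridAdj p1 w ∧ ¬ gridAdj w p1 := by
        rintro ⟨x, y⟩ hw
        have hr := hreg _ hw
        simp only at hr
        have step : ((j:ℤ) - x).natAbs + ((2 - (j:ℤ)) - y).natAbs = 1 → False := by
          intro h
          have hd : ((x,y) : ℤ×ℤ) = ((j:ℤ), 3 - (j:ℤ)) ∨
              ((x,y) : ℤ×ℤ) = ((j:ℤ)+1, 2 - (j:ℤ)) := by
            simp only [Prod.mk.injEq]; omega
          rcases hd with h' | h' <;> rw [h'] at hw
          · exact hq1 hw
          · exact hq2 hw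
        constructor <;> intro hadj <;> simp only [gridAdj, hp1] at hadj <;>
          apply step <;> omega
      have key2 : ∀ w ∈ τ, ¬ gridAdj p2 w ∧ ¬ gridAdj w p2 := by
        rintro ⟨x, y⟩ hw
        have hr := hreg _ hw
        simp only at hr
        have step : ((j:ℤ) - x).natAbs + ((1 - (j:ℤ) + (n:ℤ)) - y).natAbs = 1 → False := by
          intro h
          have hd : ((x,y) : ℤ×ℤ) = ((j:ℤ), -(j:ℤ) + (n:ℤ)) ∨
              ((x,y) : ℤ×ℤ) = ((j:ℤ)-1, 1 - (j:ℤ) + (n:ℤ)) := by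
            simp only [Prod.mk.injEq]; omega
          rcases hd with h' | h' <;> rw [h'] at hw
          · exact hq3 hw
          · exact hq4 hw
        constructor <;> intro hadj <;> simp only [gridAdj, hp2] at hadj <;>
          apply step <;> omega
      refine ⟨insert p1 (insert p2 τ), ⟨?_, ?_, ?_⟩, ?_⟩
      · -- region
        intro p hp
        rcases Finset.mem_insert.1 hp with rfl | hp'
        · refine ⟨?_, ?_, ?_, ?_⟩ <;> simp only [hp1] <;> omega
        rcases Finset.mem_insert.1 hp' with rfl | hp''
        · refine ⟨?_, ?_, ?_, ?_⟩ <;> simp only [hp2] <;> omega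
        · exact hreg p hp''
      · -- independence
        intro v hv w hw
        rcases Finset.mem_insert.1 hv with rfl | hv'
        · rcases Finset.mem_insert.1 hw with rfl | hw'
          · simp only [gridAdj, hp1]; omega
          rcases Finset.mem_insert.1 hw' with rfl | hw''
          · simp only [gridAdj, hp1, hp2]; omega
          · exact (key1 w hw'').1
        rcases Finset.mem_insert.1 hv' with rfl | hv''
        · rcases Finset.mem_insert.1 hw with rfl | hw'
          · simp only [gridAdj, hp1, hp2]; omega
          rcases Finset.mem_insert.1 hw' with rfl | hw''
          · simp only [gridAdj, hp2]; omega
          · exact (key2 w hw'').1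
        · rcases Finset.mem_insert.1 hw with rfl | hw'
          · exact (key1 v hv'').2
          rcases Finset.mem_insert.1 hw' with rfl | hw''
          · exact (key2 v hv'').2
          · exact hind v hv'' w hw''
      · -- boundary
        intro a ha1 ha2
        constructor
        · rcases eq_or_ne a j with rfl | haj
          · simp only [Finset.mem_insert]
            constructor
            · intro _; exact hjA
            · intro _; left; trivial
          · have e1 : ((a:ℤ), 2-(a:ℤ)) ≠ p1 := by
              simp only [hp1, Prod.mk.injEq, ne_eq, not_and]; intro h; omega
            have e2 : ((a:ℤ), 2-(a:ℤ)) ≠ p2 := by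
              simp only [hp2, Prod.mk.injEq, ne_eq, not_and]; intro h; omega
            rw [Finset.mem_insert, Finset.mem_insert]
            simp only [e1, e2, false_or]
            rw [(hbd a ha1 ha2).1, Finset.mem_erase]
            simp [haj]
        · rcases eq_or_ne a j with rfl | haj
          · simp only [Finset.mem_insert]
            constructor
            · intro _; exact hjA
            · intro _; right; left; trivial
          · have e1 : ((a:ℤ), 1-(a:ℤ)+(n:ℤ)) ≠ p1 := by
              simp only [hp1, Prod.mk.injEq, ne_eq, not_and]; intro h; omega
            have e2 : ((a:ℤ), 1-(a:ℤ)+(n:ℤ)) ≠ p2 := by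
              simp only [hp2, Prod.mk.injEq, ne_eq, not_and]; intro h; omega
            rw [Finset.mem_insert, Finset.mem_insert]
            simp only [e1, e2, false_or]
            rw [(hbd a ha1 ha2).2, Finset.mem_erase]
            simp [haj]
      · -- e σ = τ
        have h1 : p1 ∉ insert p2 τ := by
          simp only [Finset.mem_insert]
          rintro (h | h)
          · exact hpne h
          · exact hp1τ h
        simp only
        rw [Finset.erase_insert h1, Finset.erase_insert hp2τ]
    · -- cardinality / sign
      rintro σ hσ
      obtain ⟨h1, h2⟩ := hmem σ hσ
      have h2' : p2 ∈ σ.erase p1 := Finset.mem_erase.2 ⟨Ne.symm hpne, h2⟩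
      rw [Finset.card_erase_of_mem h2', Finset.card_erase_of_mem h1]
      have hc2 : 2 ≤ σ.card := Finset.one_lt_card.2 ⟨p1, h1, p2, h2, hpne⟩
      obtain ⟨c, hc⟩ : ∃ c, σ.card = c + 2 := ⟨σ.card - 2, by omega⟩
      rw [hc, show c + 2 - 1 - 1 = c from by omega, pow_add]
      norm_num

/-- For `m ≥ 3`, `2 ≤ j ≤ m − 1` and `A ⊆ {1,…,m}` with
`{j−1, j, j+1} ⊆ A`, setting `B = A ∖ {j}` one has
`Z(P_{m,n}(A,A)) = Z(P_{m,n}(B,B))` for every `n ≥ 2`, and consequently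
`G_{A,A}(t) + G_{B,B}(t) = 2`. -/
theorem Gser_match (m : ℕ) (hm : 3 ≤ m) (j : ℕ) (hj1 : 2 ≤ j) (hj2 : j ≤ m - 1)
    (A : Finset ℕ) (hA : A ⊆ Finset.Icc 1 m)
    (hsub : ({j - 1, j, j + 1} : Finset ℕ) ⊆ A) :
    (∀ n : ℕ, 2 ≤ n → Zpara m n A A = Zpara m n (A.erase j) (A.erase j)) ∧
      Gser m A + Gser m (A.erase j) = 2 := by
  have hjA : j ∈ A := hsub (by simp)
  have hA1 : j - 1 ∈ A := hsub (by simp)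
  have hA2 : j + 1 ∈ A := hsub (by simp)
  have main : ∀ n : ℕ, 2 ≤ n → Zpara m n A A = Zpara m n (A.erase j) (A.erase j) :=
    fun n hn => zpara_step m n j hj1 (by omega) hn A hjA hA1 hA2
  refine ⟨main, ?_⟩
  have hcard : A.card = (A.erase j).card + 1 := by
    have := Finset.card_erase_of_mem hjA
    have : 0 < A.card := Finset.card_pos.2 ⟨j, hjA⟩
    rw [Finset.card_erase_of_mem hjA]
    omega
  ext k
  rw [show (2 : PowerSeries ℤ) = (1 : PowerSeries ℤ) + 1 from by norm_num]
  rw [map_add, map_add, PowerSeries.coeff_one]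
  simp only [Gser, PowerSeries.coeff_mk]
  rcases eq_or_ne k 0 with rfl | hk
  · norm_num
  · rw [if_neg hk, if_neg hk, if_neg hk]
    rw [main (k+1) (by omega), hcard, pow_succ]
    ring
end

section
/- For m = 4, every subset β ⊆ {1,2,3,4}, and every integer j ≥ 5: Z(P_{4,j}(∅,β)) = −Z(P_{4,j−3}(∅,β)). -/
/-! A configuration on `P_{m,n+1}` is a configuration on `P_{m,n}` together with its last
diagonal `{(a, 2 - a + n)}`, and the two diagonals only interact through a compatibility
condition. Hence `B ↦ Z(P_{m,n}(A,B))`, restricted to `B ⊆ {1,…,m}`, evolves under a fixed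
transfer operator. For `m = 4` and `A = ∅` a finite computation shows that three steps of this
evolution, started from `Z(P_{4,2}(∅,·))`, give `-Z(P_{4,2}(∅,·))`; linearity of the transfer
operator then propagates the sign relation to all `j ≥ 5`. -/

open Finset

section Configurations

variable {m n : ℕ} {A B S : Finset ℕ} {σ τ : Finset (ℤ × ℤ)} {p : ℤ × ℤ}

noncomputable def vertexFinset (m n : ℕ) : Finset (ℤ × ℤ) :=
  (Icc (1 : ℤ) m ×ˢ Icc (2 - (m : ℤ)) n).filter fun p => 1 - p.1 < p.2 ∧ p.2 ≤ 1 - p.1 + n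

lemma ParaConfig.subset_vertexFinset (h : ParaConfig m n A B σ) : σ ⊆ vertexFinset m n := by
  intro p hp
  obtain ⟨h1, h2, h3, h4⟩ := h.1 p hp
  simp only [vertexFinset, mem_filter, mem_product, mem_Icc]
  omega

open Classical in
noncomputable def configs (m n : ℕ) (A B : Finset ℕ) : Finset (Finset (ℤ × ℤ)) :=
  (vertexFinset m n).powerset.filter (ParaConfig m n A B)

lemma mem_configs : σ ∈ configs m n A B ↔ ParaConfig m n A B σ := by
  classical
  simp only [configs, mem_filter, mem_powerset]
  exact ⟨And.right, fun h => ⟨h.subset_vertexFinset, h⟩⟩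

lemma Zpara_eq_sum_configs (m n : ℕ) (A B : Finset ℕ) :
    Zpara m n A B = ∑ σ ∈ configs m n A B, (-1 : ℤ) ^ #σ := by
  rw [Zpara, ← finsum_mem_coe_finset]
  congr 1
  ext σ
  simp [mem_configs]

/-- The right boundary of `P_{m,n}` lies on the `n`-th diagonal `{(a, 1 - a + n)}`. -/
def diagonalPoints (n : ℕ) (B : Finset ℕ) : Finset (ℤ × ℤ) :=
  B.image fun a : ℕ => ((a : ℤ), 1 - (a : ℤ) + n)

def diagonalTrace (m n : ℕ) (σ : Finset (ℤ × ℤ)) : Finset ℕ :=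
  (Icc 1 m).filter fun a => ((a : ℤ), 1 - (a : ℤ) + n) ∈ σ

def truncate (n : ℕ) (σ : Finset (ℤ × ℤ)) : Finset (ℤ × ℤ) :=
  σ.filter fun p => p.2 ≤ 1 - p.1 + n

lemma mem_diagonalPoints :
    p ∈ diagonalPoints n B ↔ p.2 = 1 - p.1 + n ∧ ∃ a ∈ B, (a : ℤ) = p.1 := by
  obtain ⟨p1, p2⟩ := p
  simp only [diagonalPoints, mem_image, Prod.mk.injEq]
  constructor
  · rintro ⟨a, ha, rfl, rfl⟩
    exact ⟨rfl, a, ha, rfl⟩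
  · rintro ⟨rfl, a, ha, rfl⟩
    exact ⟨a, ha, rfl, rfl⟩

lemma card_diagonalPoints : #(diagonalPoints n B) = #B :=
  card_image_of_injective B fun a b h => by simpa using congrArg Prod.fst h

lemma diagonalTrace_subset : diagonalTrace m n σ ⊆ Icc 1 m :=
  filter_subset _ _

lemma diagonalTrace_truncate : diagonalTrace m n (truncate n σ) = diagonalTrace m n σ := by
  ext a
  simp [diagonalTrace, truncate]

/-- The neighbours of `(a, 1 - a + n)` on the next diagonal are `(a, 2 - a + n)` and
`(a + 1, 1 - a + n)`. -/
def Compatible (S T : Finset ℕ) : Prop :=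
  Disjoint S T ∧ ∀ a ∈ S, a + 1 ∉ T

instance : DecidableRel Compatible := fun S T => by
  unfold Compatible
  infer_instance

namespace ParaConfig

lemma mem_diagonalPoints (h : ParaConfig m n A B σ) (hp : p ∈ σ) (hp2 : p.2 = 1 - p.1 + n) :
    p ∈ diagonalPoints n B := by
  obtain ⟨h1, h2, -, -⟩ := h.1 p hp
  have hB := (h.2.2 p.1.toNat (by omega) (by omega)).2
  rw [Int.toNat_of_nonneg (by omega), ← hp2] at hB
  exact _root_.mem_diagonalPoints.2 ⟨hp2, p.1.toNat, hB.1 hp, by omega⟩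

lemma diagonalPoints_subset (h : ParaConfig m n A B σ) (hB : B ⊆ Icc 1 m) :
    diagonalPoints n B ⊆ σ := by
  refine image_subset_iff.2 fun a ha => ?_
  obtain ⟨ha1, ham⟩ := mem_Icc.1 (hB ha)
  exact (h.2.2 a ha1 ham).2.2 ha

lemma diagonalTrace_eq (h : ParaConfig m n A B σ) (hB : B ⊆ Icc 1 m) :
    diagonalTrace m n σ = B := by
  ext a
  simp only [diagonalTrace, mem_filter, mem_Icc]
  constructor
  · rintro ⟨⟨ha1, ham⟩, hmem⟩
    exact (h.2.2 a ha1 ham).2.1 hmem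
  · intro ha
    obtain ⟨ha1, ham⟩ := mem_Icc.1 (hB ha)
    exact ⟨⟨ha1, ham⟩, (h.2.2 a ha1 ham).2.2 ha⟩

lemma truncate (hn : 1 ≤ n) (h : ParaConfig m (n + 1) A B σ) :
    ParaConfig m n A (diagonalTrace m n σ) (truncate n σ) := by
  obtain ⟨hbound, hind, hbd⟩ := h
  refine ⟨fun p hp => ?_, fun v hv w hw => hind v (filter_subset _ _ hv) w (filter_subset _ _ hw),
    fun a ha1 ham => ⟨?_, ?_⟩⟩
  · obtain ⟨hp, hle⟩ := mem_filter.1 hp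
    obtain ⟨h1, h2, h3, -⟩ := hbound p hp
    exact ⟨h1, h2, h3, hle⟩
  · rw [← (hbd a ha1 ham).1, _root_.truncate, mem_filter]
    exact ⟨And.left, fun hmem => ⟨hmem, by dsimp only; omega⟩⟩
  · simp only [diagonalTrace, _root_.truncate, mem_filter, mem_Icc, le_refl, and_true]
    exact ⟨fun hmem => ⟨⟨ha1, ham⟩, hmem⟩, And.right⟩

lemma compatible (h : ParaConfig m (n + 1) A B σ) (hB : B ⊆ Icc 1 m) :
    Compatible (diagonalTrace m n σ) B := by
  have hdiag : ∀ {a}, a ∈ diagonalTrace m n σ → ((a : ℤ), 1 - (a : ℤ) + n) ∈ σ :=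
    fun ha => (mem_filter.1 ha).2
  have hnext : ∀ {a}, a ∈ B → ((a : ℤ), 1 - (a : ℤ) + ((n + 1 : ℕ) : ℤ)) ∈ σ :=
    fun ha => h.diagonalPoints_subset hB (_root_.mem_diagonalPoints.2 ⟨rfl, _, ha, rfl⟩)
  refine ⟨disjoint_left.2 fun a haS haB => ?_, fun a haS haB => ?_⟩
  · exact h.2.1 _ (hdiag haS) _ (hnext haB) (by simp only [gridAdj]; omega)
  · exact h.2.1 _ (hdiag haS) _ (hnext haB) (by simp only [gridAdj]; omega)

lemma truncate_union_diagonalPoints (h : ParaConfig m (n + 1) A B σ) (hB : B ⊆ Icc 1 m) :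
    _root_.truncate n σ ∪ diagonalPoints (n + 1) B = σ := by
  refine Subset.antisymm (union_subset (filter_subset _ _) (h.diagonalPoints_subset hB))
    fun p hp => ?_
  by_cases hle : p.2 ≤ 1 - p.1 + n
  · exact mem_union_left _ (mem_filter.2 ⟨hp, hle⟩)
  · obtain ⟨-, -, -, h4⟩ := h.1 p hp
    exact mem_union_right _ (h.mem_diagonalPoints hp (by omega))

lemma disjoint_diagonalPoints_succ (h : ParaConfig m n A S τ) :
    Disjoint τ (diagonalPoints (n + 1) B) := by
  refine disjoint_left.2 fun p hp hD => ?_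
  obtain ⟨-, -, -, h4⟩ := h.1 p hp
  have := (_root_.mem_diagonalPoints.1 hD).1
  omega

lemma truncate_union_diagonalPoints_succ (h : ParaConfig m n A S τ) :
    _root_.truncate n (τ ∪ diagonalPoints (n + 1) B) = τ := by
  ext p
  simp only [_root_.truncate, mem_filter, mem_union]
  constructor
  · rintro ⟨hp | hD, hle⟩
    · exact hp
    · have := (_root_.mem_diagonalPoints.1 hD).1
      omega
  · exact fun hp => ⟨Or.inl hp, (h.1 p hp).2.2.2⟩

lemma union_diagonalPoints (hn : 1 ≤ n) (hB : B ⊆ Icc 1 m) (hc : Compatible S B)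
    (h : ParaConfig m n A S τ) : ParaConfig m (n + 1) A B (τ ∪ diagonalPoints (n + 1) B) := by
  have hD : ∀ {q}, q ∈ diagonalPoints (n + 1) B →
      ∃ a ∈ B, 1 ≤ a ∧ a ≤ m ∧ (a : ℤ) = q.1 ∧ q.2 = 1 - q.1 + n + 1 := by
    intro q hq
    obtain ⟨hq2, a, ha, hq1⟩ := _root_.mem_diagonalPoints.1 hq
    obtain ⟨ha1, ham⟩ := mem_Icc.1 (hB ha)
    exact ⟨a, ha, ha1, ham, hq1, by push_cast at hq2; omega⟩
  -- a point of `τ` adjacent to the new diagonal lies on the `n`-th diagonal, where `τ` is `S`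
  have hcross : ∀ p ∈ τ, ∀ q ∈ diagonalPoints (n + 1) B, ¬ gridAdj p q := by
    intro p hp q hq hadj
    obtain ⟨a, ha, -, -, hq1, hq2⟩ := hD hq
    obtain ⟨h1, -, -, h4⟩ := h.1 p hp
    simp only [gridAdj] at hadj
    obtain ⟨-, b, hb, hbp⟩ := _root_.mem_diagonalPoints.1 (h.mem_diagonalPoints hp (by omega))
    rcases (by omega : b = a ∨ b + 1 = a) with rfl | rfl
    · exact disjoint_left.1 hc.1 hb ha
    · exact hc.2 b hb ha
  refine ⟨fun p hp => ?_, fun v hv w hw hadj => ?_, fun a ha1 ham => ⟨?_, ?_⟩⟩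
  · rcases mem_union.1 hp with hp | hp
    · obtain ⟨h1, h2, h3, h4⟩ := h.1 p hp
      exact ⟨h1, h2, h3, by push_cast; omega⟩
    · obtain ⟨a, -, ha1, ham, ha, hp2⟩ := hD hp
      push_cast
      omega
  · rcases mem_union.1 hv with hv | hv <;> rcases mem_union.1 hw with hw | hw
    · exact h.2.1 v hv w hw hadj
    · exact hcross v hv w hw hadj
    · exact hcross w hw v hv (by simp only [gridAdj] at hadj ⊢; omega)
    · obtain ⟨-, -, -, -, hv1, hv2⟩ := hD hv
      obtain ⟨-, -, -, -, hw1, hw2⟩ := hD hw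
      simp only [gridAdj] at hadj
      omega
  · rw [mem_union, ← (h.2.2 a ha1 ham).1, or_iff_left_iff_imp]
    intro hq
    obtain ⟨-, -, -, -, -, hq2⟩ := hD hq
    dsimp only at hq2
    omega
  · rw [mem_union, or_iff_right_of_imp fun hp => ?_, _root_.mem_diagonalPoints]
    · exact ⟨fun ⟨_, b, hb, hba⟩ => by rwa [← Nat.cast_inj.1 hba], fun ha => ⟨rfl, a, ha, rfl⟩⟩
    · obtain ⟨-, -, -, h4⟩ := h.1 _ hp
      push_cast at h4
      omega

end ParaConfig

end Configurations

section Transfer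

variable {m n : ℕ} {A B S : Finset ℕ}

lemma sum_configs_diagonalTrace_eq (hn : 1 ≤ n) (hB : B ⊆ Icc 1 m) (hS : S ⊆ Icc 1 m)
    (hc : Compatible S B) :
    ∑ σ ∈ configs m (n + 1) A B with diagonalTrace m n σ = S, (-1 : ℤ) ^ #σ =
      (-1) ^ #B * Zpara m n A S := by
  rw [Zpara_eq_sum_configs, mul_sum]
  refine sum_nbij' (truncate n) (· ∪ diagonalPoints (n + 1) B) (fun σ hσ => ?_)
    (fun τ hτ => ?_) (fun σ hσ => ?_) (fun τ hτ => ?_) (fun σ hσ => ?_)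
  all_goals simp only [mem_filter, mem_configs] at *
  · exact hσ.2 ▸ hσ.1.truncate hn
  · refine ⟨hτ.union_diagonalPoints hn hB hc, ?_⟩
    rw [← diagonalTrace_truncate, hτ.truncate_union_diagonalPoints_succ, hτ.diagonalTrace_eq hS]
  · exact hσ.1.truncate_union_diagonalPoints hB
  · exact hτ.truncate_union_diagonalPoints_succ
  · conv_lhs => rw [← hσ.1.truncate_union_diagonalPoints hB]
    rw [card_union_of_disjoint (hσ.2 ▸ hσ.1.truncate hn).disjoint_diagonalPoints_succ,
      card_diagonalPoints, pow_add, mul_comm]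

def transfer (m : ℕ) (f : Finset ℕ → ℤ) (B : Finset ℕ) : ℤ :=
  (-1) ^ #B * ∑ S ∈ (Icc 1 m).powerset with Compatible S B, f S

lemma transfer_congr {f g : Finset ℕ → ℤ} (h : ∀ S ⊆ Icc 1 m, f S = g S) :
    transfer m f B = transfer m g B := by
  unfold transfer
  congr 1
  exact sum_congr rfl fun S hS => h S (mem_powerset.1 (mem_filter.1 hS).1)

lemma transfer_neg (f : Finset ℕ → ℤ) : transfer m (-f) B = -transfer m f B := by
  simp [transfer, sum_neg_distrib]

lemma Zpara_succ (hn : 1 ≤ n) (hB : B ⊆ Icc 1 m) :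
    Zpara m (n + 1) A B = transfer m (Zpara m n A) B := by
  rw [transfer, mul_sum, Zpara_eq_sum_configs]
  have hmaps : ∀ σ ∈ configs m (n + 1) A B,
      diagonalTrace m n σ ∈ (Icc 1 m).powerset.filter (Compatible · B) := fun σ hσ =>
    mem_filter.2 ⟨mem_powerset.2 diagonalTrace_subset, (mem_configs.1 hσ).compatible hB⟩
  rw [← sum_fiberwise_of_maps_to hmaps]
  refine sum_congr rfl fun S hS => ?_
  obtain ⟨hS, hc⟩ := mem_filter.1 hS
  exact sum_configs_diagonalTrace_eq hn hB (mem_powerset.1 hS) hc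

lemma Zpara_one_empty (hS : S ⊆ Icc 1 m) : Zpara m 1 ∅ S = if S = ∅ then 1 else 0 := by
  -- in `P_{m,1}` every vertex is on the left boundary, so only `∅` can be a configuration
  have hempty : ∀ σ, ParaConfig m 1 ∅ S σ → σ = ∅ := by
    intro σ h
    refine eq_empty_of_forall_notMem fun p hp => ?_
    obtain ⟨h1, h2, h3, h4⟩ := h.1 p hp
    have hleft := (h.2.2 p.1.toNat (by omega) (by omega)).1
    rw [Int.toNat_of_nonneg (by omega), show 2 - p.1 = p.2 by push_cast at h4; omega] at hleft
    exact notMem_empty _ (hleft.1 hp)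
  have hconfig : ParaConfig m 1 ∅ S ∅ ↔ S = ∅ := by
    refine ⟨fun h => eq_empty_of_forall_notMem fun a ha => ?_, fun h => ?_⟩
    · obtain ⟨ha1, ham⟩ := mem_Icc.1 (hS ha)
      exact notMem_empty _ ((h.2.2 a ha1 ham).2.2 ha)
    · subst h
      exact ⟨by simp, by simp, by simp⟩
  rw [Zpara_eq_sum_configs]
  split_ifs with h
  · rw [show configs m 1 ∅ S = {∅} from eq_singleton_iff_unique_mem.2
      ⟨mem_configs.2 (hconfig.2 h), fun σ hσ => hempty σ (mem_configs.1 hσ)⟩]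
    simp
  · refine sum_eq_zero fun σ hσ => absurd ?_ h
    have hσ := mem_configs.1 hσ
    exact hconfig.1 (hempty σ hσ ▸ hσ)

lemma Zpara_empty_eq_iterate_transfer (k : ℕ) (hB : B ⊆ Icc 1 m) :
    Zpara m (k + 1) ∅ B = (transfer m)^[k] (fun S => if S = ∅ then 1 else 0) B := by
  induction k generalizing B with
  | zero => exact Zpara_one_empty hB
  | succ k ih =>
    rw [Zpara_succ (by omega) hB, Function.iterate_succ_apply']
    exact transfer_congr fun S hS => ih hS

end Transfer

lemma transfer_four_iterate_four_eq_neg :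
    ∀ B ∈ (Icc 1 4).powerset, (transfer 4)^[4] (fun S => if S = ∅ then 1 else 0) B =
      -(transfer 4)^[1] (fun S => if S = ∅ then 1 else 0) B := by
  decide

/-- For `m = 4`, every `β ⊆ {1,2,3,4}` and every `j ≥ 5`,
`Z(P_{4,j}(∅,β)) = −Z(P_{4,j−3}(∅,β))`. -/
theorem Zpara_empty_rec (β : Finset ℕ) (hβ : β ⊆ Finset.Icc 1 4)
    (j : ℕ) (hj : 5 ≤ j) :
    Zpara 4 j ∅ β = -Zpara 4 (j - 3) ∅ β := by
  induction j, hj using Nat.le_induction generalizing β with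
  | base =>
    change Zpara 4 (4 + 1) ∅ β = -Zpara 4 (1 + 1) ∅ β
    rw [Zpara_empty_eq_iterate_transfer 4 hβ, Zpara_empty_eq_iterate_transfer 1 hβ]
    exact transfer_four_iterate_four_eq_neg β (mem_powerset.2 hβ)
  | succ j hj ih =>
    obtain ⟨i, rfl⟩ : ∃ i, j = i + 4 := ⟨j - 4, by omega⟩
    rw [show i + 4 + 1 - 3 = i + 1 + 1 by omega, Zpara_succ (by omega) hβ,
      Zpara_succ (by omega) hβ, ← transfer_neg]
    exact transfer_congr fun S hS => ih S hS
end
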